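/- arXiv:1601.05645 — 10 statements merged into one kernel-verified Lean document; each statement's English description precedes it below -/
import Mathlib

section
/- If the coefficient tridiagonal matrix J of a recursive matrix A is totally positive of order r (all minors of size ≤ r of every finite leading principal submatrix are nonnegative), then A is totally positive of order r. -/
/-!
Row `n + 1` of `a` is row `n` times `J`, and `J` vanishes below its subdiagonal, so the minor of
`a` on rows `f + 1` and columns `g` is the determinant of the product of a finite block of `a` on
rows `f` and a finite block of `J` on columns `g`. By Cauchy–Binet it is a sum of products of
minors of `a` on rows `f` and minors of `J`, hence nonnegative once the minors on rows `f` are.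
A minor whose first row is `0` reduces to one with rows `≥ 1` by expanding along that row,
which is `(1, 0, 0, …)`. Induction on the largest row index then covers all minors.
-/

/-- An infinite matrix is totally positive of order \$p\$ if all its minors of
order at most \$p\$ are nonnegative. -/
def IsTotallyPosOrd (p : ℕ) (M : ℕ → ℕ → ℝ) : Prop :=
  ∀ (m : ℕ), m ≤ p → ∀ (f g : Fin m → ℕ), StrictMono f → StrictMono g →
    0 ≤ (Matrix.of fun i j => M (f i) (g j)).det

open Matrix Finset

theorem Fin.sum_injective_eq_sum_strictMono_perm {β : Type*} [AddCommMonoid β] {m N : ℕ}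
    (F : (Fin m → Fin N) → β) :
    ∑ φ with Function.Injective φ, F φ =
      ∑ h with StrictMono h, ∑ σ : Equiv.Perm (Fin m), F (h ∘ σ) := by
  rw [← sum_product']
  symm
  refine sum_bij (fun q _ => q.1 ∘ q.2) ?_ ?_ ?_ (fun _ _ => rfl)
  · rintro ⟨h, σ⟩ hq
    simp only [mem_product, mem_filter, mem_univ, true_and, and_true] at hq ⊢
    exact hq.injective.comp σ.injective
  · rintro ⟨h, σ⟩ hq ⟨h', σ'⟩ hq' heq
    simp only [mem_product, mem_filter, mem_univ, true_and, and_true] at hq hq'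
    have hcomp : h ∘ σ = h' ∘ σ' := heq
    have hh : h = h' := by
      rw [← hq.range_inj hq', ← σ.surjective.range_comp, hcomp, σ'.surjective.range_comp]
    subst hh
    simp only [Prod.mk.injEq, true_and]
    exact Equiv.coe_fn_injective (hq.injective.comp_left hcomp)
  · intro φ hφ
    simp only [mem_filter, mem_univ, true_and] at hφ
    refine ⟨(φ ∘ Tuple.sort φ, (Tuple.sort φ)⁻¹), ?_, ?_⟩
    · simp only [mem_product, mem_filter, mem_univ, true_and, and_true]
      exact (Tuple.monotone_sort φ).strictMono_of_injective (hφ.comp (Tuple.sort φ).injective)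
    · ext i
      simp

theorem Matrix.det_mul_eq_sum_fun {R : Type*} [CommRing R] {m N : ℕ}
    (A : Matrix (Fin m) (Fin N) R) (B : Matrix (Fin N) (Fin m) R) :
    (A * B).det = ∑ φ : Fin m → Fin N, (∏ i, A i (φ i)) * (B.submatrix φ id).det := by
  let D : (Fin m → R) [⋀^Fin m]→ₗ[R] R := detRowAlternating
  have hrows : (A * B).det = D (fun i => ∑ k, A i k • B k) := by
    congr 1
    ext i j
    simp [Matrix.mul_apply, Finset.sum_apply]
  refine hrows.trans <| (D.toMultilinearMap.map_sum fun i k => A i k • B k).trans <|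
    sum_congr rfl fun φ _ => ?_
  change _ = _ * D fun i => B (φ i)
  exact D.toMultilinearMap.map_smul_univ (fun i => A i (φ i)) (fun i => B (φ i))

theorem Matrix.det_mul_eq_sum_strictMono {R : Type*} [CommRing R] {m N : ℕ}
    (A : Matrix (Fin m) (Fin N) R) (B : Matrix (Fin N) (Fin m) R) :
    (A * B).det = ∑ h with StrictMono h, (A.submatrix id h).det * (B.submatrix h id).det := by
  have hnoninj : ∀ φ : Fin m → Fin N, ¬ Function.Injective φ → (B.submatrix φ id).det = 0 := by
    intro φ hφ
    obtain ⟨i, j, hij, hne⟩ : ∃ i j, φ i = φ j ∧ i ≠ j := by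
      simpa [Function.Injective] using hφ
    exact det_zero_of_row_eq hne (by ext k; simp [hij])
  rw [det_mul_eq_sum_fun, ← sum_filter_of_ne (p := Function.Injective) fun φ _ h =>
      by_contra fun hφ => h (by rw [hnoninj φ hφ, mul_zero]),
    Fin.sum_injective_eq_sum_strictMono_perm]
  refine sum_congr rfl fun h _ => ?_
  rw [← det_transpose, det_apply', sum_mul]
  refine sum_congr rfl fun σ _ => ?_
  rw [show B.submatrix (h ∘ σ) id = (B.submatrix h id).submatrix σ id from rfl, det_permute]
  simp only [transpose_apply, submatrix_apply, id_eq, Function.comp_apply]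
  ring

def minor {R : Type*} (M : ℕ → ℕ → R) {m : ℕ} (f g : Fin m → ℕ) : Matrix (Fin m) (Fin m) R :=
  of fun i j => M (f i) (g j)

theorem det_minor_eq_ite_of_row_zero {R : Type*} [CommRing R] {M : ℕ → ℕ → R} (h00 : M 0 0 = 1)
    (h0 : ∀ k, 0 < k → M 0 k = 0) {m : ℕ} {f g : Fin (m + 1) → ℕ} (hf0 : f 0 = 0)
    (hg : StrictMono g) :
    (minor M f g).det =
      if g 0 = 0 then (minor M (f ∘ Fin.succ) (g ∘ Fin.succ)).det else 0 := by
  split_ifs with hg0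
  · have hrow : ∀ j ≠ 0, minor M f g 0 j = 0 := fun j hj => by
      simpa [minor, hf0] using h0 _ (hg0 ▸ hg (Fin.pos_iff_ne_zero.2 hj))
    rw [det_succ_row_zero, sum_eq_single 0 (fun j _ hj => by rw [hrow j hj, mul_zero, zero_mul])
      (by simp)]
    simp only [minor, of_apply, hf0, hg0, h00, Fin.val_zero, pow_zero, one_mul, Fin.succAbove_zero]
    rfl
  · refine det_eq_zero_of_row_eq_zero 0 fun j => ?_
    simpa [minor, hf0] using
      h0 _ ((Nat.pos_of_ne_zero hg0).trans_le (hg.monotone (Fin.zero_le j)))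

/-- Row `n + 1` of `a` is row `n` times `J`, for a `J` vanishing below its subdiagonal, so that
the sum may be truncated at any `N ≥ k + 2`. -/
def IsRecursiveWith {R : Type*} [CommSemiring R] (J a : ℕ → ℕ → R) : Prop :=
  ∀ n k N, k + 2 ≤ N → a (n + 1) k = ∑ j ∈ range N, a n j * J j k

def jacobi {R : Type*} [Zero R] (r s t : ℕ → R) (i j : ℕ) : R :=
  if i = j then s i else if i + 1 = j then r j else if j + 1 = i then t i else 0

theorem jacobi_eq_zero {R : Type*} [Zero R] (r s t : ℕ → R) {i j : ℕ} (h₁ : i ≠ j)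
    (h₂ : i + 1 ≠ j) (h₃ : j + 1 ≠ i) : jacobi r s t i j = 0 := by
  simp [jacobi, h₁, h₂, h₃]

theorem isRecursiveWith_jacobi {R : Type*} [CommSemiring R] {a : ℕ → ℕ → R} {r s t : ℕ → R}
    (hrec0 : ∀ n, a (n + 1) 0 = s 0 * a n 0 + t 1 * a n 1)
    (hrec : ∀ n k, a (n + 1) (k + 1)
      = r (k + 1) * a n k + s (k + 1) * a n (k + 1) + t (k + 2) * a n (k + 2)) :
    IsRecursiveWith (jacobi r s t) a := by
  intro n k N hN
  rw [← sum_subset (range_subset_range.2 hN) fun j _ hj => by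
    rw [jacobi_eq_zero r s t (by grind) (by grind) (by grind), mul_zero]]
  cases k with
  | zero => simp [sum_range_succ, jacobi, hrec0]; ring
  | succ k =>
    rw [sum_range_succ, sum_range_succ, sum_range_succ, sum_eq_zero fun j hj => by
      rw [jacobi_eq_zero r s t (by grind) (by grind) (by grind), mul_zero]]
    simp [jacobi, hrec]
    ring

namespace IsRecursiveWith

variable {a J : ℕ → ℕ → ℝ} {p : ℕ}

theorem det_minor_succ_nonneg (ha : IsRecursiveWith J a) (hJ : IsTotallyPosOrd p J) {m : ℕ}
    (hm : m ≤ p) {f g : Fin m → ℕ} (hg : StrictMono g)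
    (hf : ∀ h : Fin m → ℕ, StrictMono h → 0 ≤ (minor a f h).det) :
    0 ≤ (minor a (fun i => f i + 1) g).det := by
  set N := univ.sup g + 2
  have hfactor : minor a (fun i => f i + 1) g =
      (of fun i (j : Fin N) => a (f i) j) * of fun (j : Fin N) i => J j (g i) := by
    ext i j
    rw [minor, of_apply, mul_apply, ha _ _ N (by grind [le_sup (f := g) (mem_univ j)]),
      ← Fin.sum_univ_eq_sum_range]
    rfl
  rw [hfactor, det_mul_eq_sum_strictMono]
  refine sum_nonneg fun h hh => mul_nonneg (hf _ ?_) (hJ m hm _ g ?_ hg) <;>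
    exact Fin.val_strictMono.comp (mem_filter.1 hh).2

theorem isTotallyPosOrd (ha : IsRecursiveWith J a) (hJ : IsTotallyPosOrd p J) (h00 : a 0 0 = 1)
    (h0 : ∀ k, 0 < k → a 0 k = 0) : IsTotallyPosOrd p a := by
  suffices H : ∀ n m, m ≤ p → ∀ f g : Fin m → ℕ, StrictMono f → StrictMono g →
      (∀ i, f i < n) → 0 ≤ (minor a f g).det by
    intro m hm f g hf hg
    exact H (univ.sup f + 1) m hm f g hf hg fun i => Nat.lt_succ_of_le (le_sup (mem_univ i))
  intro n
  induction n with
  | zero =>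
    rintro (_ | m) - f g - - hf
    · simp
    · exact absurd (hf 0) (Nat.not_lt_zero _)
  | succ n ih =>
    have hshift : ∀ m ≤ p, ∀ f g : Fin m → ℕ, StrictMono f → StrictMono g →
        (∀ i, 0 < f i ∧ f i < n + 1) → 0 ≤ (minor a f g).det := by
      intro m hm f g hf hg hfi
      rw [show f = fun i => (f i - 1) + 1 from funext fun i => by have := hfi i; omega]
      exact ha.det_minor_succ_nonneg hJ hm hg fun h hh =>
        ih m hm _ h (fun i j hij => by have := hf hij; have := hfi i; omega) hh
          fun i => by have := hfi i; omega
    rintro (_ | m) hm f g hf hg hfn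
    · simp
    by_cases hf0 : f 0 = 0
    · rw [det_minor_eq_ite_of_row_zero h00 h0 hf0 hg]
      split_ifs
      · exact hshift m (Nat.le_of_succ_le hm) _ _ (hf.comp Fin.strictMono_succ)
          (hg.comp Fin.strictMono_succ) fun i => ⟨hf0 ▸ hf (Fin.succ_pos i), hfn _⟩
      · exact le_rfl
    · exact hshift (m + 1) hm f g hf hg fun i =>
        ⟨(Nat.pos_of_ne_zero hf0).trans_le (hf.monotone (Fin.zero_le i)), hfn i⟩

end IsRecursiveWith

theorem recursive_matrix_tp_of_jacobi_tp_general (p : ℕ) (a : ℕ → ℕ → ℝ) (r s t : ℕ → ℝ)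
    (ha0 : a 0 0 = 1) (hzero : ∀ n k, n < k → a n k = 0)
    (hrec0 : ∀ n, a (n + 1) 0 = s 0 * a n 0 + t 1 * a n 1)
    (hrec : ∀ n k, a (n + 1) (k + 1)
      = r (k + 1) * a n k + s (k + 1) * a n (k + 1) + t (k + 2) * a n (k + 2))
    (hJ : IsTotallyPosOrd p (fun i j =>
      if i = j then s i else if i + 1 = j then r j else if j + 1 = i then t i else 0)) :
    IsTotallyPosOrd p a :=
  (isRecursiveWith_jacobi hrec0 hrec).isTotallyPosOrd hJ ha0 (hzero 0)

/-- If the coefficient (Jacobi) matrix of a recursive matrix is totally positive of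
order $p$, then so is the recursive matrix itself. -/
theorem recursive_matrix_tp_of_jacobi_tp (p : ℕ) (a : ℕ → ℕ → ℝ) (r s t : ℕ → ℝ)
    (hr : ∀ k, 0 ≤ r k) (hs : ∀ k, 0 ≤ s k) (ht : ∀ k, 0 ≤ t k)
    (ha0 : a 0 0 = 1) (hzero : ∀ n k, n < k → a n k = 0)
    (hrec0 : ∀ n, a (n + 1) 0 = s 0 * a n 0 + t 1 * a n 1)
    (hrec : ∀ n k, a (n + 1) (k + 1)
      = r (k + 1) * a n k + s (k + 1) * a n (k + 1) + t (k + 2) * a n (k + 2))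
    (hJ : IsTotallyPosOrd p (fun i j =>
      if i = j then s i else if i + 1 = j then r j else if j + 1 = i then t i else 0)) :
    IsTotallyPosOrd p a :=
  recursive_matrix_tp_of_jacobi_tp_general p a r s t ha0 hzero hrec0 hrec hJ
end

section
/- If the recursive matrix A is totally positive of order 2, then the sequence of Catalan-like numbers (a_{n,0})_{n≥0} is log-convex, i.e., a_{n,0} a_{n+2,0} ≥ a_{n+1,0}^2 for all n. -/
lemma strictMono_vecCons_two {α : Type*} [Preorder α] {i j : α} (hij : i < j) :
    StrictMono (![i, j] : Fin 2 → α) := by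
  intro x y hxy
  fin_cases x <;> fin_cases y <;> simp_all

theorem IsTotallyPosOrd.antidiag_mul_le_diag_mul {p : ℕ} {M : ℕ → ℕ → ℝ}
    (hM : IsTotallyPosOrd p M) (hp : 2 ≤ p) {i j k l : ℕ} (hij : i < j) (hkl : k < l) :
    M i l * M j k ≤ M i k * M j l := by
  have hdet := hM 2 hp ![i, j] ![k, l] (strictMono_vecCons_two hij) (strictMono_vecCons_two hkl)
  simp only [Matrix.det_fin_two, Matrix.of_apply, Matrix.cons_val_zero, Matrix.cons_val_one] at hdet
  linarith

lemma mul_sub_sq_eq_of_recurrence (x y : ℕ → ℝ) (c d : ℝ)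
    (hx : ∀ n, x (n + 1) = c * x n + d * y n) (n : ℕ) :
    x n * x (n + 2) - x (n + 1) ^ 2 = d * (x n * y (n + 1) - y n * x (n + 1)) := by
  rw [hx (n + 1), hx n]
  ring

theorem catalanLike_logConvex_of_tp2_general (a : ℕ → ℕ → ℝ) (s t : ℕ → ℝ)
    (ht : ∀ k, 0 ≤ t k)
    (hrec0 : ∀ n, a (n + 1) 0 = s 0 * a n 0 + t 1 * a n 1)
    (hA : IsTotallyPosOrd 2 a) :
    ∀ n : ℕ, a (n + 1) 0 ^ 2 ≤ a n 0 * a (n + 2) 0 := by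
  intro n
  have hminor : 0 ≤ a n 0 * a (n + 1) 1 - a n 1 * a (n + 1) 0 :=
    sub_nonneg.2 (hA.antidiag_mul_le_diag_mul le_rfl n.lt_succ_self Nat.zero_lt_one)
  have hdiff := mul_sub_sq_eq_of_recurrence (a · 0) (a · 1) (s 0) (t 1) hrec0 n
  linarith [mul_nonneg (ht 1) hminor]

/-- If the recursive matrix is TP$_2$, then the Catalan-like numbers $(a_{n,0})$
form a log-convex sequence. -/
theorem catalanLike_logConvex_of_tp2 (a : ℕ → ℕ → ℝ) (r s t : ℕ → ℝ)
    (hr : ∀ k, 0 ≤ r k) (hs : ∀ k, 0 ≤ s k) (ht : ∀ k, 0 ≤ t k)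
    (ha0 : a 0 0 = 1) (hzero : ∀ n k, n < k → a n k = 0)
    (hrec0 : ∀ n, a (n + 1) 0 = s 0 * a n 0 + t 1 * a n 1)
    (hrec : ∀ n k, a (n + 1) (k + 1)
      = r (k + 1) * a n k + s (k + 1) * a n (k + 1) + t (k + 2) * a n (k + 2))
    (hA : IsTotallyPosOrd 2 a) :
    ∀ n : ℕ, a (n + 1) 0 ^ 2 ≤ a n 0 * a (n + 2) 0 :=
  catalanLike_logConvex_of_tp2_general a s t ht hrec0 hA
end

section
/- If a recursive matrix A satisfies a_{0,0}=1 and a_{n+1,k} = r_k a_{n,k-1} + s_k a_{n,k} with r_k, s_k ≥ 0 (the case t_k = 0), then A is totally positive: every minor of every finite leading principal submatrix is nonnegative. -/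
/-!
Write row `n + 1` of `a` as row `n` times the bidiagonal matrix with diagonal `s` and
superdiagonal `r`: each entry `a (n + 1) k` is a nonnegative combination of `a n k` and
`a n (k - 1)`. Expanding every column of a minor with first row index positive in this way
writes it, by multilinearity, as a nonnegative combination of minors with all row indices
lowered by one and weakly increasing column indices; those are either minors again or have
two equal columns. A minor whose first row index is `0` has first row `(a 0 (g 0), 0, …, 0)`
and reduces to a smaller minor. Induction on the size, then on the first row index, concludes.
-/

/-- An infinite matrix is totally positive if all its minors are nonnegative. -/
def IsTotallyPos (M : ℕ → ℕ → ℝ) : Prop :=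
  ∀ (m : ℕ) (f g : Fin m → ℕ), StrictMono f → StrictMono g →
    0 ≤ (Matrix.of fun i j => M (f i) (g j)).det

open Finset

namespace Matrix

variable {R : Type*} [CommRing R] {n : Type*} [Fintype n] [DecidableEq n]

theorem det_submatrix_eq_zero_of_not_injective_right {l n' : Type*} (A : Matrix l n' R)
    (f : n → l) {g : n → n'} (hg : ¬ g.Injective) : (A.submatrix f g).det = 0 := by
  obtain ⟨i, j, hgij, hij⟩ := Function.not_injective_iff.mp hg
  exact det_zero_of_column_eq hij fun k => by simp [hgij]

theorem det_of_sum_mul_col {ι : Type*} [Fintype ι] (w : n → ι → R) (M : ι → Matrix n n R) :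
    det (of fun i j => ∑ b, w j b * M b i j) =
      ∑ c : n → ι, (∏ j, w j (c j)) * det (of fun i j => M (c j) i j) := by
  rw [← det_transpose]
  have hrows : (of fun i j => ∑ b, w j b * M b i j)ᵀ =
      fun j => ∑ b, fun i => w j b * M b i j := by
    ext j i
    simp
  rw [hrows]
  refine (detRowAlternating.toMultilinearMap.map_sum fun j b i => w j b * M b i j).trans
    (Finset.sum_congr rfl fun c _ => ?_)
  rw [← det_transpose (of fun i j => M (c j) i j)]
  exact det_mul_column (fun j => w j (c j)) (of fun j i => M (c j) i j)

theorem det_succ_eq_mul_det_of_row_zero {m : ℕ} (A : Matrix (Fin (m + 1)) (Fin (m + 1)) R)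
    (h : ∀ j, j ≠ 0 → A 0 j = 0) : A.det = A 0 0 * (A.submatrix Fin.succ Fin.succ).det := by
  rw [det_succ_row_zero, Fintype.sum_eq_single 0 fun j hj => by simp [h j hj]]
  simp

theorem det_submatrix_nonneg_of_monotone [Preorder R] {l ι : Type*} [LinearOrder ι] {m : ℕ}
    (A : Matrix l ι R) (f : Fin m → l) {g : Fin m → ι} (hg : Monotone g)
    (h : ∀ g' : Fin m → ι, StrictMono g' → 0 ≤ (A.submatrix f g').det) :
    0 ≤ (A.submatrix f g).det := by
  by_cases hinj : g.Injective
  · exact h g (hg.strictMono_of_injective hinj)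
  · rw [det_submatrix_eq_zero_of_not_injective_right A f hinj]

end Matrix

open Matrix

/-- The choice `true` takes the superdiagonal entry `r k` and moves to column `k - 1`;
column `0` has no such entry, so its weight is `0` (and `0 - 1 = 0` is harmless). -/
def stepWeight (r s : ℕ → ℝ) : ℕ → Bool → ℝ
  | k, false => s k
  | 0, true => 0
  | k + 1, true => r (k + 1)

def stepColumn (k : ℕ) : Bool → ℕ
  | false => k
  | true => k - 1

theorem stepWeight_nonneg {r s : ℕ → ℝ} (hr : ∀ k, 0 ≤ r k) (hs : ∀ k, 0 ≤ s k)
    (k : ℕ) (b : Bool) : 0 ≤ stepWeight r s k b := by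
  cases b <;> cases k <;> simp [stepWeight, hr, hs]

theorem StrictMono.monotone_stepColumn {m : ℕ} {g : Fin m → ℕ} (hg : StrictMono g)
    (c : Fin m → Bool) : Monotone fun j => stepColumn (g j) (c j) := by
  intro i j hij
  rcases hij.eq_or_lt with rfl | hlt
  · rfl
  · have := hg hlt
    show stepColumn (g i) (c i) ≤ stepColumn (g j) (c j)
    cases c i <;> cases c j <;> simp only [stepColumn] <;> omega

section RecursiveMatrix

variable {a : ℕ → ℕ → ℝ} {r s : ℕ → ℝ}

theorem recursive_succ_eq_sum_step (hrec0 : ∀ n, a (n + 1) 0 = s 0 * a n 0)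
    (hrec : ∀ n k, a (n + 1) (k + 1) = r (k + 1) * a n k + s (k + 1) * a n (k + 1)) (n k : ℕ) :
    a (n + 1) k = ∑ b, stepWeight r s k b * a n (stepColumn k b) := by
  cases k <;> simp [stepWeight, stepColumn, hrec0, hrec, add_comm]

theorem det_submatrix_eq_sum_step (hrec0 : ∀ n, a (n + 1) 0 = s 0 * a n 0)
    (hrec : ∀ n k, a (n + 1) (k + 1) = r (k + 1) * a n k + s (k + 1) * a n (k + 1)) {m : ℕ}
    (f g : Fin m → ℕ) (hf : ∀ i, f i ≠ 0) :
    ((of a).submatrix f g).det = ∑ c : Fin m → Bool, (∏ j, stepWeight r s (g j) (c j)) *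
      ((of a).submatrix (fun i => f i - 1) fun j => stepColumn (g j) (c j)).det := by
  have hcols : (of a).submatrix f g = of fun i j =>
      ∑ b, stepWeight r s (g j) b * a (f i - 1) (stepColumn (g j) b) := by
    ext i j
    rw [submatrix_apply, of_apply, ← Nat.succ_pred_eq_of_ne_zero (hf i),
      recursive_succ_eq_sum_step hrec0 hrec]
    rfl
  rw [hcols]
  exact det_of_sum_mul_col (fun j b => stepWeight r s (g j) b)
    fun b => of fun i j => a (f i - 1) (stepColumn (g j) b)

theorem det_submatrix_eq_mul_of_apply_zero_eq_zero (hzero : ∀ n k, n < k → a n k = 0) {m : ℕ}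
    {f g : Fin (m + 1) → ℕ} (hf0 : f 0 = 0) (hg : StrictMono g) :
    ((of a).submatrix f g).det =
      a 0 (g 0) * ((of a).submatrix (f ∘ Fin.succ) (g ∘ Fin.succ)).det := by
  rw [det_succ_eq_mul_det_of_row_zero ((of a).submatrix f g) fun j hj => ?_]
  · simp [hf0, submatrix_submatrix]
  simp only [submatrix_apply, of_apply, hf0]
  exact hzero 0 (g j) ((Nat.zero_le _).trans_lt (hg (Fin.pos_of_ne_zero hj)))

theorem det_submatrix_nonneg_of_apply_zero_eq_zero (ha0 : a 0 0 = 1)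
    (hzero : ∀ n k, n < k → a n k = 0) {m : ℕ} {f g : Fin (m + 1) → ℕ} (hf0 : f 0 = 0)
    (hg : StrictMono g) (h : 0 ≤ ((of a).submatrix (f ∘ Fin.succ) (g ∘ Fin.succ)).det) :
    0 ≤ ((of a).submatrix f g).det := by
  have hrow : 0 ≤ a 0 (g 0) := by
    cases hg0 : g 0 with
    | zero => simp [ha0]
    | succ k => simp [hzero 0 (k + 1) k.succ_pos]
  rw [det_submatrix_eq_mul_of_apply_zero_eq_zero hzero hf0 hg]
  exact mul_nonneg hrow h

theorem det_submatrix_nonneg_of_ne_zero (hr : ∀ k, 0 ≤ r k) (hs : ∀ k, 0 ≤ s k)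
    (hrec0 : ∀ n, a (n + 1) 0 = s 0 * a n 0)
    (hrec : ∀ n k, a (n + 1) (k + 1) = r (k + 1) * a n k + s (k + 1) * a n (k + 1)) {m : ℕ}
    {f g : Fin m → ℕ} (hf : ∀ i, f i ≠ 0) (hg : StrictMono g)
    (h : ∀ g', StrictMono g' → 0 ≤ ((of a).submatrix (fun i => f i - 1) g').det) :
    0 ≤ ((of a).submatrix f g).det := by
  rw [det_submatrix_eq_sum_step hrec0 hrec f g hf]
  exact sum_nonneg fun c _ => mul_nonneg (prod_nonneg fun j _ => stepWeight_nonneg hr hs _ _)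
    (det_submatrix_nonneg_of_monotone _ _ (hg.monotone_stepColumn c) h)

end RecursiveMatrix

/-- A recursive matrix with $t_k = 0$, i.e. $a_{n+1,k} = r_k a_{n,k-1} + s_k a_{n,k}$
with nonnegative $r_k, s_k$, is totally positive. -/
theorem recursive_matrix_tp_of_bidiagonal (a : ℕ → ℕ → ℝ) (r s : ℕ → ℝ)
    (hr : ∀ k, 0 ≤ r k) (hs : ∀ k, 0 ≤ s k)
    (ha0 : a 0 0 = 1) (hzero : ∀ n k, n < k → a n k = 0)
    (hrec0 : ∀ n, a (n + 1) 0 = s 0 * a n 0)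
    (hrec : ∀ n k, a (n + 1) (k + 1) = r (k + 1) * a n k + s (k + 1) * a n (k + 1)) :
    IsTotallyPos a := by
  intro m
  induction m with
  | zero => intro f g _ _; simp
  | succ m ih =>
    suffices h : ∀ N (f g : Fin (m + 1) → ℕ), f 0 = N → StrictMono f → StrictMono g →
        0 ≤ ((of a).submatrix f g).det from fun f g => h _ f g rfl
    intro N
    induction N with
    | zero =>
      intro f g hf0 hf hg
      exact det_submatrix_nonneg_of_apply_zero_eq_zero ha0 hzero hf0 hg
        (ih _ _ (hf.comp Fin.strictMono_succ) (hg.comp Fin.strictMono_succ))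
    | succ N ihN =>
      intro f g hf0 hf hg
      have hpos : ∀ i, f i ≠ 0 := fun i => by have := hf.monotone (Fin.zero_le i); omega
      have hf' : StrictMono fun i => f i - 1 := fun i j hij => by
        have := hf hij; have := hpos i; dsimp only; omega
      exact det_submatrix_nonneg_of_ne_zero hr hs hrec0 hrec hpos hg
        fun g' hg' => ihN _ g' (by simp [hf0]) hf' hg'
end

section
/- A nonnegative lower (or upper) bidiagonal matrix is totally positive: all its minors are nonnegative. -/
/-!
In the Leibniz expansion of a minor `det (M.submatrix f g)` of a lower bidiagonal matrix, a
permutation `σ` contributes only if every row index `f (σ i)` is `g i` or `g i + 1`. Since `f` and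
`g` are strictly increasing, this forces `σ` to be increasing, hence the identity. So the minor is
the product of its diagonal entries, which is nonnegative; the upper case follows by transposition.
-/

open Matrix Finset

theorem Matrix.det_eq_prod_diag_of_prod_perm_eq_zero {m R : Type*} [Fintype m] [DecidableEq m]
    [CommRing R] (A : Matrix m m R) (h : ∀ σ : Equiv.Perm m, σ ≠ 1 → ∏ i, A (σ i) i = 0) :
    A.det = ∏ i, A i i := by
  rw [det_apply, sum_eq_single 1 (fun σ _ hσ => by rw [h σ hσ, smul_zero]) (by simp)]
  simp

theorem Equiv.Perm.eq_one_of_le_of_le_succ {α : Type*} [LinearOrder α] [Finite α] {f g : α → ℕ}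
    (hf : StrictMono f) (hg : StrictMono g) (σ : Equiv.Perm α)
    (hσ : ∀ i, g i ≤ f (σ i) ∧ f (σ i) ≤ g i + 1) : σ = 1 := by
  have hσ_mono : StrictMono σ := fun i j hij => by
    have hle : f (σ i) ≤ f (σ j) := by
      have := hg hij
      have := (hσ i).2
      have := (hσ j).1
      omega
    exact hf.lt_iff_lt.mp (hle.lt_of_ne (hf.injective.ne (σ.injective.ne hij.ne)))
  exact Equiv.ext (congrFun hσ_mono.eq_id)

def Matrix.IsLowerBidiagonal {n : ℕ} {R : Type*} [Zero R] (M : Matrix (Fin n) (Fin n) R) : Prop :=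
  ∀ i j : Fin n, (i : ℕ) ≠ j → (i : ℕ) ≠ j + 1 → M i j = 0

namespace Matrix.IsLowerBidiagonal

variable {n : ℕ} {R : Type*}

theorem le_and_le_succ_of_ne_zero [Zero R] {M : Matrix (Fin n) (Fin n) R}
    (hbi : M.IsLowerBidiagonal) {i j : Fin n} (hij : M i j ≠ 0) :
    (j : ℕ) ≤ i ∧ (i : ℕ) ≤ j + 1 := by
  by_contra hout
  exact hij (hbi i j (by omega) (by omega))

theorem det_submatrix_nonneg [CommRing R] [PartialOrder R] [IsOrderedRing R]
    {M : Matrix (Fin n) (Fin n) R} (hbi : M.IsLowerBidiagonal) (hM : ∀ i j, 0 ≤ M i j)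
    {m : ℕ} {f g : Fin m → Fin n} (hf : StrictMono f) (hg : StrictMono g) :
    0 ≤ (M.submatrix f g).det := by
  rw [det_eq_prod_diag_of_prod_perm_eq_zero]
  · exact prod_nonneg fun i _ => hM _ _
  intro σ hσ
  by_contra hprod
  exact hσ (Equiv.Perm.eq_one_of_le_of_le_succ (Fin.val_strictMono.comp hf)
    (Fin.val_strictMono.comp hg) σ fun i => hbi.le_and_le_succ_of_ne_zero fun hzero =>
      hprod (prod_eq_zero (mem_univ i) hzero))

end Matrix.IsLowerBidiagonal

/-- A nonnegative lower (or upper) bidiagonal matrix is totally positive: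
all of its minors are nonnegative. -/
theorem bidiagonal_totally_positive (n : ℕ) (M : Matrix (Fin n) (Fin n) ℝ)
    (hM : ∀ i j, 0 ≤ M i j)
    (hbi : (∀ i j : Fin n, (i : ℕ) ≠ (j : ℕ) → (i : ℕ) ≠ (j : ℕ) + 1 → M i j = 0) ∨
           (∀ i j : Fin n, (i : ℕ) ≠ (j : ℕ) → (j : ℕ) ≠ (i : ℕ) + 1 → M i j = 0)) :
    ∀ (m : ℕ) (f g : Fin m → Fin n), StrictMono f → StrictMono g →
      0 ≤ (Matrix.of fun i j => M (f i) (g j)).det := by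
  intro m f g hf hg
  rcases hbi with hlower | hupper
  · exact IsLowerBidiagonal.det_submatrix_nonneg hlower hM hf hg
  · have hMt : Mᵀ.IsLowerBidiagonal := fun i j hij hij' => hupper j i (Ne.symm hij) hij'
    have := hMt.det_submatrix_nonneg (fun i j => hM j i) hg hf
    rwa [← transpose_submatrix, det_transpose] at this
end

section
/- Let A be the recursive matrix defined by a_{0,0}=1, a_{n+1,k} = r_k a_{n,k-1} + s_k a_{n,k} + t_{k+1} a_{n,k+1}, with all parameters nonnegative. If s_0 ≥ r_1 and s_k ≥ r_{k+1} + t_k for all k ≥ 1, then A is totally positive. -/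
open Matrix Finset

theorem det_of_sum_mul_cols {R ι α n : Type*} [CommRing R] [Fintype ι] [Fintype n]
    [DecidableEq n] (c : n → ι → R) (M : n → α → R) (e : n → ι → α) :
    det (of fun i j => ∑ b, c j b * M i (e j b))
      = ∑ κ : n → ι, (∏ j, c j (κ j)) * det (of fun i j => M i (e j (κ j))) := by
  rw [← det_transpose]
  have := (detRowAlternating : (n → R) [⋀^n]→ₗ[R] R).toMultilinearMap.map_sum
    (fun j b i => c j b * M i (e j b))
  convert this using 2 with κ
  · congr 1; ext j i; simp
  · rw [← det_transpose]
    exact (det_mul_column (fun j => c j (κ j)) (of fun j i => M i (e j (κ j)))).symm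

section ColumnCombinations

variable {α : Type*} [LinearOrder α] {m : ℕ} {M : Fin m → α → ℝ}

theorem det_nonneg_of_monotone_cols
    (hM : ∀ g : Fin m → α, StrictMono g → 0 ≤ det (of fun i j => M i (g j)))
    {μ : Fin m → α} (hμ : Monotone μ) : 0 ≤ det (of fun i j => M i (μ j)) := by
  by_cases hinj : μ.Injective
  · exact hM μ (hμ.strictMono_of_injective hinj)
  · obtain ⟨j, j', hμj, hjj'⟩ : ∃ j j', μ j = μ j' ∧ j ≠ j' := by
      simpa [Function.Injective] using hinj
    rw [det_zero_of_column_eq hjj' fun i => by simp [hμj]]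

theorem det_nonneg_of_nonneg_comb_cols {ι : Type*} [Fintype ι]
    (hM : ∀ g : Fin m → α, StrictMono g → 0 ≤ det (of fun i j => M i (g j)))
    (c : Fin m → ι → ℝ) (e : Fin m → ι → α) (hc : ∀ j b, 0 ≤ c j b)
    (he : ∀ j j' b b', j < j' → e j b ≤ e j' b') :
    0 ≤ det (of fun i j => ∑ b, c j b * M i (e j b)) := by
  rw [det_of_sum_mul_cols]
  refine sum_nonneg fun κ _ => mul_nonneg (prod_nonneg fun j _ => hc j (κ j)) ?_
  refine det_nonneg_of_monotone_cols hM fun j j' hjj' => ?_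
  rcases hjj'.lt_or_eq with h | rfl
  · exact he j j' _ _ h
  · rfl

end ColumnCombinations

def IsTotallyPosOnRowsBelow (X : ℕ → ℕ → ℝ) (N : ℕ) : Prop :=
  ∀ (m : ℕ) (f g : Fin m → ℕ), StrictMono f → StrictMono g → (∀ i, f i < N) →
    0 ≤ (of fun i j => X (f i) (g j)).det

namespace IsTotallyPosOnRowsBelow

variable {X Y : ℕ → ℕ → ℝ} {N : ℕ}

theorem zero : IsTotallyPosOnRowsBelow X 0 := by
  rintro (_ | m) f g - - hf
  · simp
  · exact absurd (hf 0) (Nat.not_lt_zero _)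

theorem of_nonneg_comb_cols {ι : Type*} [Fintype ι] (hX : IsTotallyPosOnRowsBelow X N)
    (c : ℕ → ι → ℝ) (e : ℕ → ι → ℕ) (hc : ∀ k b, 0 ≤ c k b)
    (he : ∀ k k' b b', k < k' → e k b ≤ e k' b')
    (hY : ∀ n k, Y n k = ∑ b, c k b * X n (e k b)) : IsTotallyPosOnRowsBelow Y N := by
  intro m f g hf hg hfN
  simp only [hY]
  exact det_nonneg_of_nonneg_comb_cols (fun g' hg' => hX m f g' hf hg' hfN)
    (fun j => c (g j)) (fun j => e (g j)) (fun j => hc (g j))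
    fun j j' b b' h => he _ _ b b' (hg h)

theorem succ_of_row_zero (h00 : X 0 0 = 1) (h0 : ∀ k, 0 < k → X 0 k = 0)
    (hX : IsTotallyPosOnRowsBelow (fun n k => X (n + 1) k) N) :
    IsTotallyPosOnRowsBelow X (N + 1) := by
  have hpos : ∀ m (f g : Fin m → ℕ), StrictMono f → StrictMono g → (∀ i, 0 < f i) →
      (∀ i, f i < N + 1) → 0 ≤ (of fun i j => X (f i) (g j)).det := by
    intro m f g hf hg hf0 hfN
    have hsub : ∀ i, f i - 1 + 1 = f i := fun i => Nat.sub_add_cancel (hf0 i)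
    simpa only [hsub] using hX m (fun i => f i - 1) g
      (fun i j hij => Nat.sub_lt_sub_right (hf0 i) (hf hij)) hg
      fun i => Nat.sub_lt_right_of_lt_add (hf0 i) (hfN i)
  rintro (_ | m) f g hf hg hfN
  · simp
  rcases Nat.eq_zero_or_pos (f 0) with hf0 | hf0
  · rcases Nat.eq_zero_or_pos (g 0) with hg0 | hg0
    · rw [det_succ_row_zero, Fin.sum_univ_succ, sum_eq_zero fun j _ => by
        simp [hf0, h0 _ (hg0 ▸ hg (Fin.succ_pos j))]]
      simpa [hf0, hg0, h00, submatrix] using hpos m _ _ (hf.comp Fin.strictMono_succ)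
        (hg.comp Fin.strictMono_succ) (fun i => hf0 ▸ hf (Fin.succ_pos i)) fun i => hfN _
    · rw [det_eq_zero_of_row_eq_zero 0 fun j => by
        simp [hf0, h0 _ (hg0.trans_le (hg.monotone (Fin.zero_le j)))]]
  · exact hpos _ f g hf hg (fun i => hf0.trans_le (hf.monotone (Fin.zero_le i))) hfN

end IsTotallyPosOnRowsBelow

theorem IsTotallyPos.of_forall_onRowsBelow {X : ℕ → ℕ → ℝ}
    (h : ∀ N, IsTotallyPosOnRowsBelow X N) : IsTotallyPos X :=
  fun m f g hf hg =>
    h (univ.sup f + 1) m f g hf hg fun i => Nat.lt_succ_of_le (le_sup (mem_univ i))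

-- The pivots `d_k` of `P = L U`. Row dominance gives `r (k + 1) ≤ d_k` (`le_pivot`), so the junk
-- value `r (k + 1) / 0 = 0` only occurs where `r (k + 1) = 0` anyway.
noncomputable def pivot (r s t : ℕ → ℝ) : ℕ → ℝ
  | 0 => s 0
  | k + 1 => s (k + 1) - t (k + 1) * (r (k + 1) / pivot r s t k)

noncomputable def pivotRatio (r s t : ℕ → ℝ) : ℕ → ℝ
  | 0 => 0
  | k + 1 => r (k + 1) / pivot r s t k

section Pivots

variable {r s t : ℕ → ℝ}

theorem le_pivot (hr : ∀ k, 0 ≤ r k) (ht : ∀ k, 0 ≤ t k) (h0 : r 1 ≤ s 0)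
    (hk : ∀ k : ℕ, 1 ≤ k → r (k + 1) + t k ≤ s k) (k : ℕ) :
    r (k + 1) ≤ pivot r s t k := by
  induction k with
  | zero => exact h0
  | succ k ih =>
    have hratio : r (k + 1) / pivot r s t k ≤ 1 := div_le_one_of_le₀ ih ((hr _).trans ih)
    have hdom := hk (k + 1) k.succ_pos
    simp only [pivot]
    nlinarith [ht (k + 1)]

theorem pivotRatio_nonneg (hr : ∀ k, 0 ≤ r k) (hpiv : ∀ k, 0 ≤ pivot r s t k) (k : ℕ) :
    0 ≤ pivotRatio r s t k := by
  cases k with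
  | zero => exact le_rfl
  | succ k => exact div_nonneg (hr _) (hpiv k)

theorem succ_row_eq {a : ℕ → ℕ → ℝ}
    (hrec0 : ∀ n, a (n + 1) 0 = s 0 * a n 0 + t 1 * a n 1)
    (hrec : ∀ n k, a (n + 1) (k + 1)
      = r (k + 1) * a n k + s (k + 1) * a n (k + 1) + t (k + 2) * a n (k + 2))
    (hpiv : ∀ k, pivot r s t k = 0 → r (k + 1) = 0) {b : ℕ → ℕ → ℝ}
    (hb : ∀ n k, b n k = pivot r s t k * a n k + t (k + 1) * a n (k + 1)) (n k : ℕ) :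
    a (n + 1) k = b n k + pivotRatio r s t k * b n (k - 1) := by
  cases k with
  | zero => simp [hrec0, hb, pivot, pivotRatio]
  | succ k =>
    have hcancel := mul_div_cancel_of_imp' (hpiv k)
    simp only [hrec, hb, pivot, pivotRatio, Nat.add_sub_cancel]
    linear_combination (-a n k) * hcancel

end Pivots

theorem recursive_matrix_tp_of_rowDominant_general (a : ℕ → ℕ → ℝ) (r s t : ℕ → ℝ)
    (hr : ∀ k, 0 ≤ r k) (ht : ∀ k, 0 ≤ t k)
    (ha0 : a 0 0 = 1) (hzero : ∀ n k, n < k → a n k = 0)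
    (hrec0 : ∀ n, a (n + 1) 0 = s 0 * a n 0 + t 1 * a n 1)
    (hrec : ∀ n k, a (n + 1) (k + 1)
      = r (k + 1) * a n k + s (k + 1) * a n (k + 1) + t (k + 2) * a n (k + 2))
    (h0 : r 1 ≤ s 0) (hk : ∀ k : ℕ, 1 ≤ k → r (k + 1) + t k ≤ s k) :
    IsTotallyPos a := by
  have hle := le_pivot hr ht h0 hk
  have hpiv : ∀ k, 0 ≤ pivot r s t k := fun k => (hr _).trans (hle k)
  set b : ℕ → ℕ → ℝ := fun n k => pivot r s t k * a n k + t (k + 1) * a n (k + 1)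
  have ha : ∀ n k, a (n + 1) k = b n k + pivotRatio r s t k * b n (k - 1) :=
    succ_row_eq hrec0 hrec (fun k h => le_antisymm (h ▸ hle k) (hr _)) fun _ _ => rfl
  refine IsTotallyPos.of_forall_onRowsBelow fun N => ?_
  induction N with
  | zero => exact .zero
  | succ N ih =>
    refine .succ_of_row_zero ha0 (hzero 0) ?_
    have hb : IsTotallyPosOnRowsBelow b N :=
      ih.of_nonneg_comb_cols (fun k => ![pivot r s t k, t (k + 1)]) (fun k => ![k, k + 1])
        (fun k => by simp [Fin.forall_fin_two, hpiv, ht])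
        (fun k k' => by
          simp only [Fin.forall_fin_two, cons_val_zero, cons_val_one, cons_val_fin_one]; omega)
        fun n k => by simp [b]
    exact hb.of_nonneg_comb_cols (fun k => ![1, pivotRatio r s t k]) (fun k => ![k, k - 1])
      (fun k => by simp [Fin.forall_fin_two, pivotRatio_nonneg hr hpiv])
      (fun k k' => by
        simp only [Fin.forall_fin_two, cons_val_zero, cons_val_one, cons_val_fin_one]; omega)
      fun n k => by simp [ha]

/-- If $s_0 \ge r_1$ and $s_k \ge r_{k+1} + t_k$ for all $k \ge 1$,
then the recursive matrix is totally positive. -/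
theorem recursive_matrix_tp_of_rowDominant (a : ℕ → ℕ → ℝ) (r s t : ℕ → ℝ)
    (hr : ∀ k, 0 ≤ r k) (hs : ∀ k, 0 ≤ s k) (ht : ∀ k, 0 ≤ t k)
    (ha0 : a 0 0 = 1) (hzero : ∀ n k, n < k → a n k = 0)
    (hrec0 : ∀ n, a (n + 1) 0 = s 0 * a n 0 + t 1 * a n 1)
    (hrec : ∀ n k, a (n + 1) (k + 1)
      = r (k + 1) * a n k + s (k + 1) * a n (k + 1) + t (k + 2) * a n (k + 2))
    (h0 : r 1 ≤ s 0) (hk : ∀ k : ℕ, 1 ≤ k → r (k + 1) + t k ≤ s k) :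
    IsTotallyPos a :=
  recursive_matrix_tp_of_rowDominant_general a r s t hr ht ha0 hzero hrec0 hrec h0 hk
end

section
/- Let A be the recursive matrix defined by a_{0,0}=1, a_{n+1,k} = r_k a_{n,k-1} + s_k a_{n,k} + t_{k+1} a_{n,k+1}, with all parameters nonnegative. If s_0 ≥ t_1 and s_k ≥ r_k + t_{k+1} for all k ≥ 1, then A is totally positive. -/
open Finset Matrix

def MaximalMinorsNonneg {m : ℕ} (w : ℕ → Fin m → ℝ) : Prop :=
  ∀ p : Fin m → ℕ, StrictMono p → 0 ≤ (Matrix.of fun j => w (p j)).det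

namespace MaximalMinorsNonneg

variable {m : ℕ} {w : ℕ → Fin m → ℝ}

theorem det_nonneg_of_monotone (hw : MaximalMinorsNonneg w) {p : Fin m → ℕ} (hp : Monotone p) :
    0 ≤ (Matrix.of fun j => w (p j)).det := by
  by_cases hinj : Function.Injective p
  · exact hw p (hp.strictMono_of_injective hinj)
  · obtain ⟨j, j', hpj, hne⟩ := Function.not_injective_iff.mp hinj
    rw [det_zero_of_row_eq hne (congrArg w hpj)]

/-- Expanding by multilinearity, every term is a minor of `w` along a monotone selection. -/
theorem sum_smul (hw : MaximalMinorsNonneg w) (S : ℕ → Finset ℕ) (c : ℕ → ℕ → ℝ)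
    (hc : ∀ k, ∀ q ∈ S k, 0 ≤ c k q)
    (hS : ∀ k k', k < k' → ∀ q ∈ S k, ∀ q' ∈ S k', q ≤ q') :
    MaximalMinorsNonneg fun k => ∑ q ∈ S k, c k q • w q := by
  intro p hp
  change 0 ≤ detRowAlternating.toMultilinearMap fun j => ∑ q ∈ S (p j), c (p j) q • w q
  rw [MultilinearMap.map_sum_finset]
  refine sum_nonneg fun σ hσ => ?_
  rw [Fintype.mem_piFinset] at hσ
  rw [MultilinearMap.map_smul_univ]
  refine smul_nonneg (prod_nonneg fun j _ => hc _ _ (hσ j)) (hw.det_nonneg_of_monotone ?_)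
  intro j j' hjj'
  rcases hjj'.lt_or_eq with h | rfl
  · exact hS _ _ (hp h) _ (hσ j) _ (hσ j')
  · rfl

theorem pairSums (hw : MaximalMinorsNonneg w) :
    MaximalMinorsNonneg fun h => ∑ q ∈ Icc (h / 2) ((h + 1) / 2), w q := by
  simpa using hw.sum_smul (fun h => Icc (h / 2) ((h + 1) / 2)) (fun _ _ => 1)
    (fun _ _ _ => zero_le_one) (fun h h' hh' q hq q' hq' => by
      simp only [mem_Icc] at hq hq'
      omega)

/-- With `v (2k) = w k` and `v (2k+1) = w k + w (k+1)`, the `k`-th vector is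
`r k • v (2k-1) + (s k - r k - t (k+1)) • v (2k) + t (k+1) • v (2k+1)`, a combination with
ordered supports, nonnegative by diagonal dominance. The truncation of `k - 1` at `k = 0` is
harmless because `r 0 = 0`. -/
theorem tridiagonal (hw : MaximalMinorsNonneg w) {r s t : ℕ → ℝ} (hr : ∀ k, 0 ≤ r k)
    (ht : ∀ k, 0 ≤ t k) (hr0 : r 0 = 0) (hdom : ∀ k, r k + t (k + 1) ≤ s k) :
    MaximalMinorsNonneg fun k => r k • w (k - 1) + s k • w k + t (k + 1) • w (k + 1) := by
  set v : ℕ → Fin m → ℝ := fun h => ∑ q ∈ Icc (h / 2) ((h + 1) / 2), w q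
  have hv_even (k : ℕ) : v (2 * k) = w k := by
    simp [v, show (2 * k + 1) / 2 = k by omega]
  have hv_odd (k : ℕ) : v (2 * k + 1) = w k + w (k + 1) := by
    simp [v, show (2 * k + 1 + 1) / 2 = k + 1 by omega, show (2 * k + 1) / 2 = k by omega,
      sum_Icc_succ_top]
  have hv : MaximalMinorsNonneg v := hw.pairSums
  clear_value v
  set c : ℕ → ℕ → ℝ := fun k q =>
    if q < 2 * k then r k else if q = 2 * k then s k - r k - t (k + 1) else t (k + 1)
  have key := hv.sum_smul (fun k => Icc (2 * k - 1) (2 * k + 1)) c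
    (fun k q _ => by
      simp only [c]
      split_ifs
      · exact hr k
      · linarith [hdom k]
      · exact ht (k + 1))
    (fun k k' hkk' q hq q' hq' => by
      simp only [mem_Icc] at hq hq'
      omega)
  convert key using 2 with k
  rcases k with _ | k
  · have hv0 : v 0 = w 0 := hv_even 0
    simp [sum_Icc_succ_top, c, hr0, hv_odd 0, hv0]
    module
  · have h3 : Icc (2 * (k + 1) - 1) (2 * (k + 1) + 1)
        = {2 * k + 1, 2 * (k + 1), 2 * (k + 1) + 1} := by
      ext q; simp; omega
    rw [h3, sum_insert (by simp; omega), sum_insert (by simp), sum_singleton, hv_even, hv_odd,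
      hv_odd]
    simp only [c, if_pos (show 2 * k + 1 < 2 * (k + 1) by omega), lt_irrefl, if_false, if_true,
      show ¬ 2 * (k + 1) + 1 < 2 * (k + 1) by omega, show 2 * (k + 1) + 1 ≠ 2 * (k + 1) by omega,
      add_tsub_cancel_right]
    module

theorem vecCons_single_zero (hw : MaximalMinorsNonneg w) :
    MaximalMinorsNonneg fun k => vecCons ((Pi.single 0 1 : ℕ → ℝ) k) (w k) := by
  intro p hp
  rw [det_succ_column_zero, sum_eq_single 0]
  · exact mul_nonneg (by simp [Pi.single_apply]; split_ifs <;> norm_num)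
      (hw _ (hp.comp Fin.strictMono_succ))
  · intro i _ hi
    have : p i ≠ 0 := (hp (Fin.pos_of_ne_zero hi)).ne_bot
    simp [Pi.single_apply, this]
  · simp

end MaximalMinorsNonneg

open MaximalMinorsNonneg in
theorem isTotallyPos_of_tridiagonal_recurrence (a : ℕ → ℕ → ℝ) (r s t : ℕ → ℝ)
    (hr : ∀ k, 0 ≤ r k) (ht : ∀ k, 0 ≤ t k) (hr0 : r 0 = 0)
    (hdom : ∀ k, r k + t (k + 1) ≤ s k) (ha0 : a 0 = Pi.single 0 1)
    (hrec : ∀ n k, a (n + 1) k = r k * a n (k - 1) + s k * a n k + t (k + 1) * a n (k + 1)) :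
    IsTotallyPos a := by
  suffices h : ∀ m (f : Fin m → ℕ), StrictMono f →
      MaximalMinorsNonneg fun k i => a (f i) k by
    intro m f g hf hg
    rw [← det_transpose]
    exact h m f hf g hg
  intro m f hf
  induction hN : m + ∑ i, f i using Nat.strong_induction_on generalizing m f with
  | _ N ih =>
  cases m with
  | zero => intro p _; simp
  | succ m =>
  by_cases hf0 : f 0 = 0
  · have hcols : (fun k i => a (f i) k)
        = fun k => vecCons (a 0 k) fun i => a (f i.succ) k := by
      funext k i
      refine Fin.cases ?_ (fun i => ?_) i <;> simp [hf0]
    rw [hcols, ha0]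
    refine vecCons_single_zero (ih _ ?_ m _ (hf.comp Fin.strictMono_succ) rfl)
    rw [Fin.sum_univ_succ] at hN
    omega
  · obtain ⟨f', rfl⟩ : ∃ f' : Fin (m + 1) → ℕ, f = fun i => f' i + 1 :=
      ⟨fun i => f i - 1, funext fun i => by
        have := hf.monotone (Fin.zero_le i)
        dsimp only
        omega⟩
    have hcols : (fun k i => a (f' i + 1) k) = fun k =>
        r k • (fun i => a (f' i) (k - 1)) + s k • (fun i => a (f' i) k)
          + t (k + 1) • fun i => a (f' i) (k + 1) := by
      funext k i
      simp [hrec]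
    rw [hcols]
    refine tridiagonal (ih _ ?_ _ f' (fun i j hij => by simpa using hf hij) rfl) hr ht hr0 hdom
    rw [← hN, sum_add_distrib]
    simp

theorem recursive_matrix_tp_of_colDominant_general (a : ℕ → ℕ → ℝ) (r s t : ℕ → ℝ)
    (hr : ∀ k, 0 ≤ r k) (ht : ∀ k, 0 ≤ t k)
    (ha0 : a 0 0 = 1) (hzero : ∀ n k, n < k → a n k = 0)
    (hrec0 : ∀ n, a (n + 1) 0 = s 0 * a n 0 + t 1 * a n 1)
    (hrec : ∀ n k, a (n + 1) (k + 1)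
      = r (k + 1) * a n k + s (k + 1) * a n (k + 1) + t (k + 2) * a n (k + 2))
    (h0 : t 1 ≤ s 0) (hk : ∀ k : ℕ, 1 ≤ k → r k + t (k + 1) ≤ s k) :
    IsTotallyPos a := by
  -- `r 0` does not occur in the recurrence; setting it to `0` makes the recurrence uniform in `k`.
  refine isTotallyPos_of_tridiagonal_recurrence a (Function.update r 0 0) s t
    (fun k => ?_) ht (Function.update_self ..) (fun k => ?_) ?_ (fun n k => ?_)
  · rcases k with _ | k <;> simp [hr]
  · rcases k with _ | k
    · simpa using h0
    · simpa using hk (k + 1) (by omega)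
  · funext k
    rcases k with _ | k
    · simp [ha0]
    · simp [hzero 0 (k + 1) (by omega)]
  · rcases k with _ | k
    · simp [hrec0]
    · simp [hrec]

/-- If $s_0 \ge t_1$ and $s_k \ge r_k + t_{k+1}$ for all $k \ge 1$,
then the recursive matrix is totally positive. -/
theorem recursive_matrix_tp_of_colDominant (a : ℕ → ℕ → ℝ) (r s t : ℕ → ℝ)
    (hr : ∀ k, 0 ≤ r k) (hs : ∀ k, 0 ≤ s k) (ht : ∀ k, 0 ≤ t k)
    (ha0 : a 0 0 = 1) (hzero : ∀ n k, n < k → a n k = 0)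
    (hrec0 : ∀ n, a (n + 1) 0 = s 0 * a n 0 + t 1 * a n 1)
    (hrec : ∀ n k, a (n + 1) (k + 1)
      = r (k + 1) * a n k + s (k + 1) * a n (k + 1) + t (k + 2) * a n (k + 2))
    (h0 : t 1 ≤ s 0) (hk : ∀ k : ℕ, 1 ≤ k → r k + t (k + 1) ≤ s k) :
    IsTotallyPos a :=
  recursive_matrix_tp_of_colDominant_general a r s t hr ht ha0 hzero hrec0 hrec h0 hk
end

section
/- Let A be the recursive matrix defined by a_{0,0}=1 and a_{n+1,k} = a_{n,k-1} + s_k a_{n,k} + a_{n,k+1} (i.e., r_k = t_k = 1), with s_k ≥ 0. If s_0 ≥ 1 and s_k ≥ 2 for all k ≥ 1, then A is totally positive. -/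
open Matrix Finset

section CauchyBinet

variable {R : Type*} [CommRing R] {m K : ℕ}

theorem sum_injective_eq_sum_strictMono_comp_perm {M : Type*} [AddCommMonoid M]
    (F : (Fin m → Fin K) → M) :
    ∑ p : Fin m → Fin K with Function.Injective p, F p =
      ∑ q : Fin m → Fin K with StrictMono q, ∑ σ : Equiv.Perm (Fin m), F (q ∘ σ) := by
  rw [← sum_product']
  symm
  refine sum_bij (fun x _ => x.1 ∘ x.2) ?_ ?_ ?_ fun _ _ => rfl
  · rintro ⟨q, σ⟩ hx
    simp only [mem_product, mem_filter, mem_univ, true_and] at hx ⊢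
    exact hx.1.injective.comp σ.injective
  · rintro ⟨q, σ⟩ hx ⟨q', σ'⟩ hx' h
    simp only [mem_product, mem_filter, mem_univ, true_and, and_true] at hx hx' h
    have hq : q = q' := by
      rw [← hx.range_inj hx', ← σ.surjective.range_comp, h, σ'.surjective.range_comp]
    subst hq
    exact Prod.ext rfl (Equiv.ext fun i => hx.injective (congrFun h i))
  · intro p hp
    simp only [mem_filter, mem_univ, true_and] at hp
    have hcard : (univ.image p).card = m := by simp [card_image_of_injective _ hp]
    set q := (univ.image p).orderEmbOfFin hcard
    have hmem : ∀ i, ∃ j, q j = p i := fun i => by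
      rw [← Set.mem_range, range_orderEmbOfFin]
      simp
    choose σ hσ using hmem
    have hσ_inj : Function.Injective σ := fun i j h => hp (by rw [← hσ i, ← hσ j, h])
    refine ⟨(q, Equiv.ofBijective σ hσ_inj.bijective_of_finite), ?_, funext hσ⟩
    simp [q.strictMono]

theorem det_mul_eq_sum_prod_mul_det_submatrix (A : Matrix (Fin m) (Fin K) R)
    (B : Matrix (Fin K) (Fin m) R) :
    det (A * B) = ∑ p : Fin m → Fin K, (∏ i, B (p i) i) * det (A.submatrix id p) := by
  simp only [det_apply', mul_apply, prod_univ_sum, mul_sum, Fintype.piFinset_univ, submatrix_apply,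
    id_eq, prod_mul_distrib]
  rw [sum_comm]
  refine sum_congr rfl fun p _ => sum_congr rfl fun σ _ => ?_
  ring

theorem det_mul_eq_sum_strictMono_det_mul_det (A : Matrix (Fin m) (Fin K) R)
    (B : Matrix (Fin K) (Fin m) R) :
    det (A * B) = ∑ q : Fin m → Fin K with StrictMono q,
      det (A.submatrix id q) * det (B.submatrix q id) := by
  have hnoninj : ∀ p : Fin m → Fin K, ¬ Function.Injective p →
      det (A.submatrix id p) = 0 := by
    intro p hp
    obtain ⟨i, j, hij, hne⟩ := Function.not_injective_iff.mp hp
    exact det_zero_of_column_eq hne fun k => by simp [hij]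
  rw [det_mul_eq_sum_prod_mul_det_submatrix, ← sum_filter_of_ne fun p _ h =>
      not_not.mp fun hp => h (by rw [hnoninj p hp, mul_zero]),
    sum_injective_eq_sum_strictMono_comp_perm]
  refine sum_congr rfl fun q _ => ?_
  have hperm : ∀ σ : Equiv.Perm (Fin m),
      det (A.submatrix id (q ∘ σ)) = Equiv.Perm.sign σ * det (A.submatrix id q) := fun σ =>
    det_permute' σ (A.submatrix id q)
  rw [det_apply' (B.submatrix q id), mul_sum]
  refine sum_congr rfl fun σ _ => ?_
  rw [hperm]
  simp only [submatrix_apply, id_eq, Function.comp_apply]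
  ring

theorem det_mul_nonneg_of_minors_nonneg [PartialOrder R] [IsOrderedRing R]
    (A : Matrix (Fin m) (Fin K) R) (B : Matrix (Fin K) (Fin m) R)
    (hA : ∀ q : Fin m → Fin K, StrictMono q → 0 ≤ det (A.submatrix id q))
    (hB : ∀ q : Fin m → Fin K, StrictMono q → 0 ≤ det (B.submatrix q id)) :
    0 ≤ det (A * B) := by
  rw [det_mul_eq_sum_strictMono_det_mul_det]
  exact sum_nonneg fun q hq => mul_nonneg (hA q (mem_filter.mp hq).2) (hB q (mem_filter.mp hq).2)

end CauchyBinet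

section Expansion

variable {R : Type*} [CommRing R] {n : ℕ}

theorem det_eq_mul_det_submatrix_succ_of_row (A : Matrix (Fin (n + 1)) (Fin (n + 1)) R)
    (h : ∀ j, j ≠ 0 → A 0 j = 0) : det A = A 0 0 * det (A.submatrix Fin.succ Fin.succ) := by
  rw [det_succ_row_zero, Fin.sum_univ_succ,
    sum_eq_zero fun j _ => by simp [h j.succ (Fin.succ_ne_zero j)]]
  simp

theorem det_eq_mul_det_submatrix_succ_of_col (A : Matrix (Fin (n + 1)) (Fin (n + 1)) R)
    (h : ∀ i, i ≠ 0 → A i 0 = 0) : det A = A 0 0 * det (A.submatrix Fin.succ Fin.succ) := by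
  rw [← det_transpose, det_eq_mul_det_submatrix_succ_of_row _ h, ← transpose_submatrix,
    det_transpose, transpose_apply]

end Expansion

section TotalPositivity

def IsTotallyPosBelow (M : ℕ → ℕ → ℝ) (n : ℕ) : Prop :=
  ∀ (m : ℕ) (f g : Fin m → ℕ), StrictMono f → StrictMono g → (∀ i, f i < n) →
    0 ≤ (Matrix.of fun i j => M (f i) (g j)).det

variable {M P Q : ℕ → ℕ → ℝ} {n : ℕ}

theorem isTotallyPos_iff_forall_isTotallyPosBelow :
    IsTotallyPos M ↔ ∀ n, IsTotallyPosBelow M n := by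
  refine ⟨fun h n m f g hf hg _ => h m f g hf hg, fun h m f g hf hg => ?_⟩
  exact h (∑ i, f i + 1) m f g hf hg fun i =>
    Nat.lt_succ_of_le (single_le_sum (fun _ _ => Nat.zero_le _) (mem_univ i))

theorem isTotallyPosBelow_zero : IsTotallyPosBelow M 0 := by
  rintro (_ | m) f g - - hf
  · simp
  · exact absurd (hf 0) (Nat.not_lt_zero _)

theorem IsTotallyPos.transpose (hM : IsTotallyPos M) : IsTotallyPos fun i j => M j i :=
  fun m f g hf hg => by
    rw [← det_transpose]
    exact hM m g f hg hf

theorem IsTotallyPos.of_lowerBidiagonal (hM : ∀ i j, 0 ≤ M i j)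
    (hsupp : ∀ i j, M i j ≠ 0 → j ≤ i ∧ i ≤ j + 1) : IsTotallyPos M := by
  intro m
  induction m with
  | zero => intro f g _ _; simp
  | succ m ih =>
    intro f g hf hg
    have hminor := ih (f ∘ Fin.succ) (g ∘ Fin.succ) (hf.comp Fin.strictMono_succ)
      (hg.comp Fin.strictMono_succ)
    rcases le_or_gt (f 0) (g 0) with hfg | hfg
    · rw [det_eq_mul_det_submatrix_succ_of_row]
      · exact mul_nonneg (hM _ _) hminor
      · intro j hj
        have := hg (Fin.pos_of_ne_zero hj)
        by_contra hne
        have := (hsupp _ _ hne).1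
        omega
    · rw [det_eq_mul_det_submatrix_succ_of_col]
      · exact mul_nonneg (hM _ _) hminor
      · intro i hi
        have := hf (Fin.pos_of_ne_zero hi)
        by_contra hne
        have := (hsupp _ _ hne).2
        omega

theorem sum_range_mul_eq_of_lower (hP : ∀ i k, i < k → P i k = 0) {i K : ℕ} (hK : i < K)
    (x : ℕ → ℝ) : ∑ k ∈ range K, P i k * x k = ∑ k ∈ range (i + 1), P i k * x k := by
  refine (sum_subset (range_subset_range.mpr hK) fun k _ hk => ?_).symm
  rw [hP i k (by simpa using hk), zero_mul]

theorem IsTotallyPosBelow.mul (hP : IsTotallyPosBelow P n) (hQ : IsTotallyPos Q)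
    (hlower : ∀ i k, i < k → P i k = 0)
    (hM : ∀ i j, M i j = ∑ k ∈ range (i + 1), P i k * Q k j) : IsTotallyPosBelow M n := by
  intro m f g hf hg hfn
  -- rows below `n` of `P` vanish from column `n` on, so `n` columns suffice for the product
  have hfac : (Matrix.of fun i j => M (f i) (g j)) =
      (Matrix.of fun i (k : Fin n) => P (f i) k) * Matrix.of fun (k : Fin n) j => Q k (g j) := by
    ext i j
    simp only [of_apply, mul_apply]
    rw [hM, Fin.sum_univ_eq_sum_range (fun k => P (f i) k * Q k (g j)),
      sum_range_mul_eq_of_lower hlower (hfn i)]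
  rw [hfac]
  exact det_mul_nonneg_of_minors_nonneg _ _
    (fun q hq => hP m f _ hf (Fin.val_strictMono.comp hq) hfn)
    (fun q hq => hQ m _ g (Fin.val_strictMono.comp hq) hg)

theorem IsTotallyPos.mul (hP : IsTotallyPos P) (hQ : IsTotallyPos Q)
    (hlower : ∀ i k, i < k → P i k = 0)
    (hM : ∀ i j, M i j = ∑ k ∈ range (i + 1), P i k * Q k j) : IsTotallyPos M :=
  isTotallyPos_iff_forall_isTotallyPosBelow.mpr fun n =>
    (isTotallyPos_iff_forall_isTotallyPosBelow.mp hP n).mul hQ hlower hM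

theorem IsTotallyPosBelow.succ_of_shift (hcorner : 0 ≤ M 0 0) (hrow : ∀ j, 0 < j → M 0 j = 0)
    (hshift : IsTotallyPosBelow (fun i j => M (i + 1) j) n) : IsTotallyPosBelow M (n + 1) := by
  have hrows_pos : ∀ (m : ℕ) (f g : Fin m → ℕ), StrictMono f → StrictMono g →
      (∀ i, f i < n + 1) → (∀ i, 0 < f i) →
      0 ≤ (Matrix.of fun i j => M (f i) (g j)).det := by
    intro m f g hf hg hfn hf0
    have h := hshift m (fun i => f i - 1) g (fun i j hij => Nat.sub_lt_sub_right (hf0 i) (hf hij))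
      hg fun i => by have := hfn i; have := hf0 i; omega
    simpa only [fun i => Nat.sub_add_cancel (hf0 i)] using h
  rintro (_ | m) f g hf hg hfn
  · simp
  rcases Nat.eq_zero_or_pos (f 0) with hf0 | hf0
  · have hrow0 : ∀ j, 0 ≤ M 0 j := fun j => by
      rcases Nat.eq_zero_or_pos j with rfl | hj
      exacts [hcorner, (hrow j hj).ge]
    rw [det_eq_mul_det_submatrix_succ_of_row]
    · refine mul_nonneg (by simpa [hf0] using hrow0 (g 0)) (hrows_pos _ _ _
        (hf.comp Fin.strictMono_succ) (hg.comp Fin.strictMono_succ) (fun i => hfn _) fun i => ?_)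
      exact hf0 ▸ hf (Fin.succ_pos i)
    · intro j hj
      simpa [hf0] using hrow (g j) ((Nat.zero_le _).trans_lt (hg (Fin.pos_of_ne_zero hj)))
  · exact hrows_pos _ f g hf hg hfn fun i => hf0.trans_le (hf.monotone (Fin.zero_le i))

end TotalPositivity

section Jacobi

def jacobiMatrix (s : ℕ → ℝ) (k c : ℕ) : ℝ :=
  (if k + 1 = c then 1 else 0) + (if k = c then s c else 0) + (if k = c + 1 then 1 else 0)

noncomputable def jacobiPivot (s : ℕ → ℝ) : ℕ → ℝ
  | 0 => s 0
  | k + 1 => s (k + 1) - (jacobiPivot s k)⁻¹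

noncomputable def jacobiLower (s : ℕ → ℝ) (k j : ℕ) : ℝ :=
  if j = k then 1 else if j + 1 = k then (jacobiPivot s j)⁻¹ else 0

noncomputable def jacobiUpper (s : ℕ → ℝ) (j c : ℕ) : ℝ :=
  if c = j then jacobiPivot s j else if c = j + 1 then 1 else 0

variable {s : ℕ → ℝ}

theorem one_le_jacobiPivot (h0 : 1 ≤ s 0) (hk : ∀ k : ℕ, 1 ≤ k → 2 ≤ s k) (k : ℕ) :
    1 ≤ jacobiPivot s k := by
  induction k with
  | zero => exact h0
  | succ k ih =>
    have := inv_le_one_of_one_le₀ ih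
    have := hk (k + 1) k.succ_pos
    rw [jacobiPivot]
    linarith

theorem jacobiMatrix_eq_sum_jacobiLower_mul_jacobiUpper (hpiv : ∀ k, jacobiPivot s k ≠ 0)
    (k c : ℕ) :
    jacobiMatrix s k c = ∑ j ∈ range (k + 1), jacobiLower s k j * jacobiUpper s j c := by
  cases k with
  | zero => rcases c with _ | _ | c <;> simp [jacobiMatrix, jacobiLower, jacobiUpper, jacobiPivot]
  | succ k =>
    rw [sum_range_succ, sum_range_succ, sum_eq_zero fun j hj => by
      simp [jacobiLower, (mem_range.mp hj).ne, (Nat.lt_succ_of_lt (mem_range.mp hj)).ne]]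
    obtain rfl | rfl | rfl | hc : c = k ∨ c = k + 1 ∨ c = k + 2 ∨ c < k ∨ k + 2 < c := by
      omega
    · simp [jacobiMatrix, jacobiLower, jacobiUpper, hpiv, show c + 1 + 1 ≠ c by omega,
        show c ≠ c + 1 + 1 by omega]
    · simp [jacobiMatrix, jacobiLower, jacobiUpper, jacobiPivot]
    · simp [jacobiMatrix, jacobiLower, jacobiUpper]
    · simp only [jacobiMatrix, jacobiLower, jacobiUpper]
      split_ifs <;> first | omega | simp

theorem isTotallyPos_jacobiMatrix (h0 : 1 ≤ s 0) (hk : ∀ k : ℕ, 1 ≤ k → 2 ≤ s k) :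
    IsTotallyPos (jacobiMatrix s) := by
  have hpiv := one_le_jacobiPivot h0 hk
  have hpiv_pos : ∀ k, 0 < jacobiPivot s k := fun k => one_pos.trans_le (hpiv k)
  have hL : IsTotallyPos (jacobiLower s) := by
    refine .of_lowerBidiagonal (fun k j => ?_) fun k j h => ?_
    · unfold jacobiLower
      split_ifs <;> first | positivity | exact (inv_pos.mpr (hpiv_pos j)).le
    · unfold jacobiLower at h
      split_ifs at h <;> first | omega | exact absurd rfl h
  have hU : IsTotallyPos fun c j => jacobiUpper s j c := by
    refine .of_lowerBidiagonal (fun c j => ?_) fun c j h => ?_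
    · unfold jacobiUpper
      split_ifs <;> first | positivity | exact (hpiv_pos j).le
    · unfold jacobiUpper at h
      split_ifs at h <;> first | omega | exact absurd rfl h
  refine hL.mul hU.transpose (fun k j hkj => ?_)
    (jacobiMatrix_eq_sum_jacobiLower_mul_jacobiUpper fun k => (hpiv_pos k).ne')
  simp [jacobiLower, hkj.ne', show j + 1 ≠ k by omega]

theorem row_succ_eq_sum_mul_jacobiMatrix {a : ℕ → ℕ → ℝ}
    (hzero : ∀ n k, n < k → a n k = 0)
    (hrec0 : ∀ n, a (n + 1) 0 = s 0 * a n 0 + a n 1)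
    (hrec : ∀ n k, a (n + 1) (k + 1) = a n k + s (k + 1) * a n (k + 1) + a n (k + 2))
    (n c : ℕ) : a (n + 1) c = ∑ k ∈ range (n + 1), a n k * jacobiMatrix s k c := by
  rw [← sum_range_mul_eq_of_lower hzero (show n < n + c + 3 by omega)]
  cases c with
  | zero => simp [jacobiMatrix, mul_add, sum_add_distrib, hrec0, mul_comm]
  | succ c =>
    simp only [jacobiMatrix, mul_add, mul_ite, mul_one, mul_zero, sum_add_distrib, add_left_inj,
      sum_ite_eq', mem_range, hrec, mul_comm]
    rw [if_pos (by omega), if_pos (by omega), if_pos (by omega)]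

end Jacobi

theorem admissible_matrix_tp_general (a : ℕ → ℕ → ℝ) (s : ℕ → ℝ)
    (ha0 : a 0 0 = 1) (hzero : ∀ n k, n < k → a n k = 0)
    (hrec0 : ∀ n, a (n + 1) 0 = s 0 * a n 0 + a n 1)
    (hrec : ∀ n k, a (n + 1) (k + 1)
      = a n k + s (k + 1) * a n (k + 1) + a n (k + 2))
    (h0 : 1 ≤ s 0) (hk : ∀ k : ℕ, 1 ≤ k → 2 ≤ s k) :
    IsTotallyPos a := by
  have hJ := isTotallyPos_jacobiMatrix h0 hk
  refine isTotallyPos_iff_forall_isTotallyPosBelow.mpr fun n => ?_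
  induction n with
  | zero => exact isTotallyPosBelow_zero
  | succ n ih =>
    refine IsTotallyPosBelow.succ_of_shift (ha0 ▸ zero_le_one) (fun j hj => hzero 0 j hj) ?_
    exact ih.mul hJ hzero (row_succ_eq_sum_mul_jacobiMatrix hzero hrec0 hrec)

/-- For the recursive matrix with $r_k = t_k = 1$: if $s_0 \ge 1$ and $s_k \ge 2$
for $k \ge 1$, then the matrix is totally positive. -/
theorem admissible_matrix_tp (a : ℕ → ℕ → ℝ) (s : ℕ → ℝ)
    (hs : ∀ k, 0 ≤ s k)
    (ha0 : a 0 0 = 1) (hzero : ∀ n k, n < k → a n k = 0)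
    (hrec0 : ∀ n, a (n + 1) 0 = s 0 * a n 0 + a n 1)
    (hrec : ∀ n k, a (n + 1) (k + 1)
      = a n k + s (k + 1) * a n (k + 1) + a n (k + 2))
    (h0 : 1 ≤ s 0) (hk : ∀ k : ℕ, 1 ≤ k → 2 ≤ s k) :
    IsTotallyPos a :=
  admissible_matrix_tp_general a s ha0 hzero hrec0 hrec h0 hk
end

section
/- Let A be the recursive matrix defined by a_{0,0}=1 and a_{n+1,k} = a_{n,k-1} + s_k a_{n,k} + t_{k+1} a_{n,k+1} (i.e., r_k = 1), with s_k, t_k ≥ 0. If s_0 ≥ 1 and s_k ≥ t_k + 1 for all k ≥ 1, then A is totally positive. -/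
/-!
Row `n + 1` of `a` is row `n` times the tridiagonal matrix `J` with superdiagonal `1`,
diagonal `s` and subdiagonal `t`. Under the dominance hypotheses the LU pivots of `J` are
`≥ 1`, so `J = L U` with both bidiagonal factors nonnegative. Multiplying a set of rows on
the right by a nonnegative bidiagonal matrix keeps all their minors nonnegative: expanding
the determinant multilinearly in the columns gives nonnegative multiples of minors on
weakly increasing column selections, and those with a repeated column vanish. Hence
nonnegativity of the minors on rows `f` passes to rows `f + n`; shifting by `f 0` reduces
to a row set containing row `0 = e₀`, and a Laplace expansion along it lowers the size.
-/

open Matrix Finset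

variable {R : Type*} [CommRing R] [PartialOrder R] {m : ℕ}

def ColMinorsNonneg (A : Fin m → ℕ → R) : Prop :=
  ∀ g : Fin m → ℕ, StrictMono g → 0 ≤ (Matrix.of fun i j => A i (g j)).det

namespace ColMinorsNonneg

variable {A B : Fin m → ℕ → R}

theorem det_nonneg_of_monotone (hA : ColMinorsNonneg A) {g : Fin m → ℕ} (hg : Monotone g) :
    0 ≤ (Matrix.of fun i j => A i (g j)).det := by
  by_cases hinj : Function.Injective g
  · exact hA g (hg.strictMono_iff_injective.2 hinj)
  · obtain ⟨j, j', hgj, hne⟩ : ∃ j j', g j = g j' ∧ j ≠ j' := by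
      simpa [Function.Injective] using hinj
    rw [det_zero_of_column_eq hne fun i => by simp [hgj]]

theorem of_two_term_columns [IsOrderedRing R] (hA : ColMinorsNonneg A) (σ τ : ℕ → ℕ)
    (c d : ℕ → R) (hc : ∀ k, 0 ≤ c k) (hd : ∀ k, 0 ≤ d k)
    (hστ : ∀ k, σ k ≤ τ k) (hτσ : ∀ j k, j < k → τ j ≤ σ k)
    (hB : ∀ i k, B i k = c k * A i (σ k) + d k * A i (τ k)) :
    ColMinorsNonneg B := by
  intro g hg
  let col (j : Fin m) (b : Bool) : ℕ := cond b (τ (g j)) (σ (g j))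
  let w (j : Fin m) (b : Bool) : R := cond b (d (g j)) (c (g j))
  have hexpand : (Matrix.of fun i j => B i (g j)).det =
      ∑ r : Fin m → Bool,
        (∏ j, w j (r j)) * (Matrix.of fun i j => A i (col j (r j))).det := by
    rw [← det_transpose]
    have hcols : (Matrix.of fun i j => B i (g j))ᵀ =
        fun j => ∑ b, w j b • fun i => A i (col j b) := by
      ext j i
      simp [w, col, hB, add_comm]
    rw [hcols]
    change detRowAlternating _ = _
    rw [← AlternatingMap.coe_multilinearMap, MultilinearMap.map_sum]
    refine sum_congr rfl fun r _ => ?_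
    rw [MultilinearMap.map_smul_univ, smul_eq_mul, ← det_transpose]
    rfl
  rw [hexpand]
  refine sum_nonneg fun r _ =>
    mul_nonneg (prod_nonneg fun j _ => ?_) (hA.det_nonneg_of_monotone ?_)
  · cases r j <;> simp [w, hc, hd]
  · refine monotone_iff_forall_lt.2 fun j j' hjj' => ?_
    calc col j (r j) ≤ τ (g j) := by cases r j <;> simp [col, hστ]
      _ ≤ σ (g j') := hτσ _ _ (hg hjj')
      _ ≤ col j' (r j') := by cases r j' <;> simp [col, hστ]

theorem cons_unit_row {A : Fin (m + 1) → ℕ → R} (hA0 : ∀ k, A 0 k = if k = 0 then 1 else 0)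
    (htail : ColMinorsNonneg fun i : Fin m => A i.succ) : ColMinorsNonneg A := by
  intro g hg
  by_cases hg0 : g 0 = 0
  · rw [det_succ_row_zero, sum_eq_single 0]
    · simp only [Fin.val_zero, pow_zero, one_mul, of_apply, hA0, hg0, if_true, Fin.succAbove_zero]
      exact htail _ (hg.comp Fin.strictMono_succ)
    · intro j _ hj
      have : g j ≠ 0 := (hg (Fin.pos_of_ne_zero hj)).ne_bot
      simp [hA0, this]
    · simp
  · refine (det_eq_zero_of_row_eq_zero 0 fun j => ?_).ge
    have : g j ≠ 0 := by have := hg.monotone (Fin.zero_le j); omega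
    simp [hA0, this]

end ColMinorsNonneg

/-- The pivots `u` of `J = L U`, where `J` has diagonal `s`, superdiagonal `1` and
subdiagonal `t`, `L` is unit lower bidiagonal with subdiagonal `t (k + 1) / u k`, and `U` is
upper bidiagonal with diagonal `u` and superdiagonal `1`. -/
def tridiagPivot {K : Type*} [Field K] (s t : ℕ → K) : ℕ → K
  | 0 => s 0
  | k + 1 => s (k + 1) - t (k + 1) / tridiagPivot s t k

section Tridiagonal

variable {K : Type*} [Field K] [LinearOrder K] [IsStrictOrderedRing K] {s t : ℕ → K}

theorem one_le_tridiagPivot (ht : ∀ k, 0 ≤ t k) (h0 : 1 ≤ s 0)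
    (hk : ∀ k, 1 ≤ k → t k + 1 ≤ s k) (k : ℕ) : 1 ≤ tridiagPivot s t k := by
  induction k with
  | zero => exact h0
  | succ k ih =>
    have : t (k + 1) / tridiagPivot s t k ≤ t (k + 1) := div_le_self (ht _) ih
    have := hk (k + 1) k.succ_pos
    simp only [tridiagPivot]
    linarith

theorem ColMinorsNonneg.of_tridiagonal {A B : Fin m → ℕ → K} (hA : ColMinorsNonneg A)
    (ht : ∀ k, 0 ≤ t k) (h0 : 1 ≤ s 0) (hk : ∀ k, 1 ≤ k → t k + 1 ≤ s k)
    (hB : ∀ i k, B i k =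
      (if k = 0 then 0 else A i (k - 1)) + s k * A i k + t (k + 1) * A i (k + 1)) :
    ColMinorsNonneg B := by
  set u := tridiagPivot s t with hu_def
  have hu : ∀ k, 1 ≤ u k := one_le_tridiagPivot ht h0 hk
  have hu0 : ∀ k, u k ≠ 0 := fun k => (one_pos.trans_le (hu k)).ne'
  let ℓ k := t (k + 1) / u k
  let AL : Fin m → ℕ → K := fun i k => A i k + ℓ k * A i (k + 1)
  have hAL : ColMinorsNonneg AL :=
    hA.of_two_term_columns id (· + 1) 1 ℓ (fun _ => zero_le_one)
      (fun k => div_nonneg (ht _) (zero_le_one.trans (hu k))) Nat.le_succ (fun _ _ h => h)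
      (fun i k => by simp [AL])
  refine hAL.of_two_term_columns (· - 1) id (fun k => if k = 0 then 0 else 1) u
    (fun k => by split_ifs <;> simp) (fun k => zero_le_one.trans (hu k)) (Nat.sub_le · 1)
    (fun _ _ h => Nat.le_sub_one_of_lt h) fun i k => ?_
  have hsuper : ∀ k, u k * ℓ k = t (k + 1) := fun k => mul_div_cancel₀ _ (hu0 k)
  cases k with
  | zero =>
    simp only [hB, AL, if_true, zero_mul, zero_add, id]
    rw [← hsuper, show s 0 = u 0 from rfl]
    ring
  | succ k =>
    have hdiag : ℓ k + u (k + 1) = s (k + 1) := by simp [ℓ, hu_def, tridiagPivot]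
    simp only [hB, AL, k.succ_ne_zero, if_false, one_mul, Nat.add_sub_cancel, id]
    rw [← hdiag, ← hsuper]
    ring

end Tridiagonal

theorem isTotallyPos_of_rowShift {a : ℕ → ℕ → ℝ}
    (hrow0 : ∀ k, a 0 k = if k = 0 then 1 else 0)
    (hshift : ∀ {m} (f : Fin m → ℕ), ColMinorsNonneg (fun i => a (f i)) →
      ColMinorsNonneg fun i => a (f i + 1)) :
    IsTotallyPos a := by
  have hshiftN {m} (f : Fin m → ℕ) (n : ℕ) (hf : ColMinorsNonneg fun i => a (f i)) :
      ColMinorsNonneg fun i => a (f i + n) := by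
    induction n with
    | zero => exact hf
    | succ n ih => exact hshift _ ih
  suffices ∀ m (f : Fin m → ℕ), StrictMono f → ColMinorsNonneg fun i => a (f i) from
    fun m f g hf hg => this m f hf g hg
  intro m
  induction m with
  | zero => intro f _ g _; simp
  | succ m ih =>
    intro f hf
    have hf0 : ∀ i, f 0 ≤ f i := fun i => hf.monotone (Fin.zero_le i)
    have hbase : ColMinorsNonneg fun i => a (f i - f 0) :=
      ColMinorsNonneg.cons_unit_row (by simpa using hrow0) (ih _ fun i j hij => by
        have := hf (Fin.succ_lt_succ_iff.2 hij)
        have := hf0 i.succ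
        omega)
    simpa [Nat.sub_add_cancel (hf0 _)] using hshiftN _ (f 0) hbase

theorem recursive_matrix_tp_r_one_general (a : ℕ → ℕ → ℝ) (s t : ℕ → ℝ)
    (ht : ∀ k, 0 ≤ t k)
    (ha0 : a 0 0 = 1) (hzero : ∀ n k, n < k → a n k = 0)
    (hrec0 : ∀ n, a (n + 1) 0 = s 0 * a n 0 + t 1 * a n 1)
    (hrec : ∀ n k, a (n + 1) (k + 1)
      = a n k + s (k + 1) * a n (k + 1) + t (k + 2) * a n (k + 2))
    (h0 : 1 ≤ s 0) (hk : ∀ k : ℕ, 1 ≤ k → t k + 1 ≤ s k) :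
    IsTotallyPos a := by
  refine isTotallyPos_of_rowShift ?_ fun f hf => hf.of_tridiagonal ht h0 hk fun i k => ?_
  · rintro (_ | k)
    · exact ha0
    · exact hzero 0 _ k.succ_pos
  · cases k <;> simp [hrec0, hrec]

/-- For the recursive matrix with $r_k = 1$: if $s_0 \ge 1$ and $s_k \ge t_k + 1$
for $k \ge 1$, then the matrix is totally positive. -/
theorem recursive_matrix_tp_r_one (a : ℕ → ℕ → ℝ) (s t : ℕ → ℝ)
    (hs : ∀ k, 0 ≤ s k) (ht : ∀ k, 0 ≤ t k)
    (ha0 : a 0 0 = 1) (hzero : ∀ n k, n < k → a n k = 0)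
    (hrec0 : ∀ n, a (n + 1) 0 = s 0 * a n 0 + t 1 * a n 1)
    (hrec : ∀ n k, a (n + 1) (k + 1)
      = a n k + s (k + 1) * a n (k + 1) + t (k + 2) * a n (k + 2))
    (h0 : 1 ≤ s 0) (hk : ∀ k : ℕ, 1 ≤ k → t k + 1 ≤ s k) :
    IsTotallyPos a :=
  recursive_matrix_tp_r_one_general a s t ht ha0 hzero hrec0 hrec h0 hk
end

section
/- The Catalan triangle of Aigner C = [C_{n,k}] defined by C_{0,0}=1, C_{n+1,0} = C_{n,0} + C_{n,1}, C_{n+1,k} = C_{n,k-1} + 2 C_{n,k} + C_{n,k+1} for k ≥ 1 (with C_{n,k}=0 unless n ≥ k ≥ 0) is totally positive. -/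
/-!
Row `n + 1` of `C` is row `n` times the tridiagonal matrix with diagonal `1, 2, 2, …` and
off-diagonal entries `1`, which factors into two bidiagonal `0/1` matrices:
`C (n+1) k = D n (k-1) + D n k` (first term absent for `k = 0`) with `D n k = C n k + C n (k+1)`.
Expanding a minor column by column, such column operations keep all maximal minors of a set of
rows nonnegative, so the minors on rows `f` follow from those on rows `f - 1`. When the first
row is row `0 = (1, 0, 0, …)`, Laplace expansion along it removes that row.
-/

open Matrix

theorem Matrix.det_of_sum_columns {n β R : Type*} [Fintype n] [DecidableEq n] [Fintype β]
    [CommRing R] (v : n → β → n → R) :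
    det (of fun i j => ∑ b, v j b i) = ∑ c : n → β, det (of fun i j => v j (c j) i) := by
  calc det (of fun i j => ∑ b, v j b i) = det (of fun j => ∑ b, v j b) := by
        rw [← det_transpose]
        congr 1
        ext j i
        simp
    _ = ∑ c : n → β, det (of fun j => v j (c j)) :=
        (detRowAlternating (R := R) (n := n)).map_sum v
    _ = ∑ c : n → β, det (of fun i j => v j (c j) i) := by
        simp_rw [← det_transpose (of fun j => v j _)]; rfl

def MaxMinorsNonneg {m : ℕ} (B : Fin m → ℕ → ℝ) : Prop :=
  ∀ g : Fin m → ℕ, StrictMono g → 0 ≤ (of fun i j => B i (g j)).det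

namespace MaxMinorsNonneg

variable {m : ℕ} {B : Fin m → ℕ → ℝ}

theorem det_nonneg_of_monotone (hB : MaxMinorsNonneg B) {g : Fin m → ℕ} (hg : Monotone g) :
    0 ≤ (of fun i j => B i (g j)).det := by
  by_cases hinj : g.Injective
  · exact hB g (hg.strictMono_of_injective hinj)
  · obtain ⟨j, j', hgj, hne⟩ : ∃ j j', g j = g j' ∧ j ≠ j' := by
      simpa [Function.Injective] using hinj
    rw [det_zero_of_column_eq hne fun i => by simp [hgj]]

theorem comb_two_columns (hB : MaxMinorsNonneg B) {w₀ w₁ : ℕ → ℝ} (hw₀ : 0 ≤ w₀) (hw₁ : 0 ≤ w₁)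
    {r₀ r₁ : ℕ → ℕ} (hr : ∀ ⦃k k'⦄, k < k' → max (r₀ k) (r₁ k) ≤ min (r₀ k') (r₁ k')) :
    MaxMinorsNonneg fun i k => w₀ k * B i (r₀ k) + w₁ k * B i (r₁ k) := by
  intro g hg
  let w (k : ℕ) (b : Bool) : ℝ := cond b (w₁ k) (w₀ k)
  let r (k : ℕ) (b : Bool) : ℕ := cond b (r₁ k) (r₀ k)
  have hsum : (of fun i j => w₀ (g j) * B i (r₀ (g j)) + w₁ (g j) * B i (r₁ (g j)))
      = of fun i j => ∑ b, (fun i => w (g j) b * B i (r (g j) b)) i := by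
    ext i j
    simp [w, r, add_comm]
  rw [hsum, det_of_sum_columns]
  refine Finset.sum_nonneg fun c _ => ?_
  have hscale := det_mul_row (fun j => w (g j) (c j)) (of fun i j => B i (r (g j) (c j)))
  simp only [of_apply] at hscale
  rw [hscale]
  refine mul_nonneg (Finset.prod_nonneg fun j _ => ?_) (hB.det_nonneg_of_monotone ?_)
  · cases c j
    exacts [hw₀ _, hw₁ _]
  · have hr_le_max : ∀ k b, r k b ≤ max (r₀ k) (r₁ k) := by intro k b; cases b <;> simp [r]
    have hmin_le_r : ∀ k b, min (r₀ k) (r₁ k) ≤ r k b := by intro k b; cases b <;> simp [r]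
    intro j j' hjj'
    rcases hjj'.lt_or_eq with hlt | rfl
    · exact (hr_le_max _ _).trans ((hr (hg hlt)).trans (hmin_le_r _ _))
    · rfl

theorem cons_single_zero (hB : MaxMinorsNonneg B) :
    MaxMinorsNonneg (Fin.cons (Pi.single 0 1) B : Fin (m + 1) → ℕ → ℝ) := by
  intro g hg
  by_cases hg0 : g 0 = 0
  · have hrow : ∀ j, j ≠ 0 → (Pi.single 0 1 : ℕ → ℝ) (g j) = 0 := fun j hj =>
      Pi.single_eq_of_ne (hg.injective.ne hj |>.trans_eq hg0) 1
    rw [det_succ_row_zero, Finset.sum_eq_single 0 (fun j _ hj => by simp [hrow j hj]) (by simp)]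
    simpa [hg0, submatrix] using hB (g ∘ Fin.succ) (hg.comp Fin.strictMono_succ)
  · rw [det_eq_zero_of_row_eq_zero 0 fun j => ?_]
    have hgj : g j ≠ 0 := by have := hg.monotone (Fin.zero_le j); omega
    simp [hgj]

end MaxMinorsNonneg

section CatalanTriangle

variable {C : ℕ → ℕ → ℝ}

theorem maxMinorsNonneg_rows_succ (hrec0 : ∀ n, C (n + 1) 0 = C n 0 + C n 1)
    (hrec : ∀ n k, C (n + 1) (k + 1) = C n k + 2 * C n (k + 1) + C n (k + 2))
    {m : ℕ} {f : Fin m → ℕ} (h : MaxMinorsNonneg fun i => C (f i)) :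
    MaxMinorsNonneg fun i => C (f i + 1) := by
  have hD := h.comb_two_columns (w₀ := 1) (w₁ := 1) zero_le_one zero_le_one
    (r₀ := id) (r₁ := Nat.succ) fun k k' hk => by dsimp only [id]; omega
  have hC := hD.comb_two_columns (w₀ := fun k => if k = 0 then 0 else 1) (w₁ := 1)
    (fun k => by positivity) zero_le_one (r₀ := fun k => k - 1) (r₁ := id)
    fun k k' hk => by dsimp only [id]; omega
  convert hC using 3 with i k
  cases k with
  | zero => simp [hrec0]
  | succ k =>
    simp only [hrec, Nat.succ_ne_zero, if_false, Pi.one_apply, one_mul, add_tsub_cancel_right, id]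
    ring

theorem maxMinorsNonneg_rows (hrow0 : C 0 = Pi.single 0 1)
    (hrec0 : ∀ n, C (n + 1) 0 = C n 0 + C n 1)
    (hrec : ∀ n k, C (n + 1) (k + 1) = C n k + 2 * C n (k + 1) + C n (k + 2)) :
    ∀ {m : ℕ} (f : Fin m → ℕ), StrictMono f → MaxMinorsNonneg fun i => C (f i) := by
  intro m
  induction m with
  | zero => intro f _ g _; simp
  | succ m ihm =>
    suffices ∀ n (f : Fin (m + 1) → ℕ), StrictMono f → f 0 = n →
        MaxMinorsNonneg fun i => C (f i)
      from fun f hf => this _ f hf rfl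
    intro n
    induction n with
    | zero =>
      intro f hf hf0
      have hcons : (fun i => C (f i)) = Fin.cons (Pi.single 0 1) fun i => C (f i.succ) := by
        ext i : 1
        cases i using Fin.cases <;> simp [hf0, hrow0]
      rw [hcons]
      exact (ihm _ (hf.comp Fin.strictMono_succ)).cons_single_zero
    | succ n ihn =>
      intro f hf hf0
      have hpos : ∀ i, 1 ≤ f i := fun i => by have := hf.monotone (Fin.zero_le i); omega
      have hpred := ihn (fun i => f i - 1)
        (fun i i' h => show f i - 1 < f i' - 1 by have := hf h; have := hpos i; omega)
        (by simp [hf0])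
      convert maxMinorsNonneg_rows_succ hrec0 hrec hpred using 3 with i
      have := hpos i
      omega

end CatalanTriangle

/-- The Catalan triangle of Aigner, given by $C_{n+1,0} = C_{n,0} + C_{n,1}$ and
$C_{n+1,k} = C_{n,k-1} + 2 C_{n,k} + C_{n,k+1}$ for $k \ge 1$, is totally positive. -/
theorem aigner_catalan_triangle_tp (C : ℕ → ℕ → ℝ)
    (hC0 : C 0 0 = 1) (hzero : ∀ n k, n < k → C n k = 0)
    (hrec0 : ∀ n, C (n + 1) 0 = C n 0 + C n 1)
    (hrec : ∀ n k, C (n + 1) (k + 1)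
      = C n k + 2 * C n (k + 1) + C n (k + 2)) :
    IsTotallyPos C := by
  have hrow0 : C 0 = Pi.single 0 1 := by
    ext k
    cases k with
    | zero => simpa using hC0
    | succ k => simpa using hzero 0 (k + 1) k.succ_pos
  exact fun _ f g hf hg => maxMinorsNonneg_rows hrow0 hrec0 hrec f hf g hg
end

section
/- The sequence of Bell numbers (B_n)_{n≥0} is log-convex: B_n B_{n+2} ≥ B_{n+1}^2 for all n ≥ 0. -/
/-- The $n$-th Bell number: the number of set partitions of an $n$-element set. -/
noncomputable def bell (n : ℕ) : ℕ :=
  Fintype.card (Finpartition (Finset.univ : Finset (Fin n)))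

/-!
Sorting the partitions of `insert a s` (with `a ∉ s`) by the block `insert a t` containing `a` and
deleting that block counts them as `∑ t ⊆ s, B (#s - #t)`, so `B (n + 1) = ∑ k, C(n, k) B k` is the binomial transform of `B`.
By Pascal's rule, three consecutive values of the binomial transform `b` of a sequence `a` are
`T`, `T + U`, `T + 2U + V` with `T, U, V = ∑ k, C(n, k) a (k + i)` for `i = 0, 1, 2`, so
`b (n + 1)² ≤ b n * b (n + 2)` reduces to `U² ≤ T V`. That is Cauchy–Schwarz with the weights
`C(n, k)` as soon as `a (k + 1)² ≤ a k * a (k + 2)` for `k ≤ n`, which for `a = B` is the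
hypothesis of a strong induction.
-/

open Finset

namespace Finpartition

lemma sup_parts_erase {α : Type*} [GeneralizedBooleanAlgebra α] [DecidableEq α] {a b : α}
    (P : Finpartition a) (hb : b ∈ P.parts) : (P.parts.erase b).sup id = a \ b := by
  have hdisj : Disjoint b ((P.parts.erase b).sup id) :=
    P.supIndep (erase_subset b P.parts) hb (notMem_erase b P.parts)
  calc (P.parts.erase b).sup id = (b ⊔ (P.parts.erase b).sup id) \ b := by
        rw [sup_sdiff_left_self, hdisj.symm.sdiff_eq_left]
    _ = a \ b := by conv_rhs => rw [← P.sup_parts, ← insert_erase hb, sup_insert, id_eq]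

variable {α : Type*} [DecidableEq α] {s t : Finset α} {a : α}

lemma part_eq_insert_of_erase_eq {P : Finpartition s} (ha : a ∈ s) (h : (P.part a).erase a = t) :
    P.part a = insert a t :=
  (insert_erase (P.mem_part_self.2 ha)).symm.trans (congrArg (insert a) h)

def partEraseEquiv (ha : a ∉ s) (ht : t ⊆ s) :
    {P : Finpartition (insert a s) // (P.part a).erase a = t} ≃ Finpartition (s \ t) where
  toFun P := P.1.ofSubset (erase_subset (insert a t) P.1.parts) <| by
    have hpart := part_eq_insert_of_erase_eq (mem_insert_self a s) P.2
    rw [← hpart, sup_parts_erase _ (P.1.part_mem.2 (mem_insert_self a s)), hpart,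
      insert_sdiff_insert, sdiff_insert_of_notMem ha]
  invFun Q := ⟨Q.extend (insert_ne_empty a t)
      (disjoint_insert_right.2 ⟨fun h ↦ ha (mem_sdiff.1 h).1, sdiff_disjoint⟩)
      (by rw [sup_eq_union, union_insert, sdiff_union_of_subset ht]), by
    rw [part_eq_of_mem _ (mem_insert_self _ _) (mem_insert_self a t),
      erase_insert fun h ↦ ha (ht h)]⟩
  left_inv P := by
    have hpart := part_eq_insert_of_erase_eq (mem_insert_self a s) P.2
    ext1; ext1
    simp only [extend_parts, ofSubset_parts]
    rw [insert_erase (hpart ▸ P.1.part_mem.2 (mem_insert_self a s))]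
  right_inv Q := by
    ext1
    simp only [extend_parts, ofSubset_parts]
    exact erase_insert fun h ↦ ha (mem_sdiff.1 (Q.subset h (mem_insert_self a t))).1

end Finpartition

section CardFinpartition

variable {α : Type*} [DecidableEq α]

theorem card_finpartition_insert {s : Finset α} {a : α} (ha : a ∉ s) :
    Fintype.card (Finpartition (insert a s)) =
      ∑ t ∈ s.powerset, Fintype.card (Finpartition (s \ t)) := by
  rw [← card_univ,
    card_eq_sum_card_fiberwise (f := fun P ↦ (P.part a).erase a) (t := s.powerset)]
  · refine sum_congr rfl fun t ht ↦ ?_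
    rw [← Fintype.card_subtype]
    exact Fintype.card_congr (Finpartition.partEraseEquiv ha (mem_powerset.1 ht))
  · intro P _
    simpa only [coe_powerset, Set.mem_preimage, Set.mem_powerset_iff, coe_subset, erase_insert ha]
      using erase_subset_erase a (P.part_subset a)

theorem card_finpartition_eq_bell (s : Finset α) :
    Fintype.card (Finpartition s) = Nat.bell #s := by
  induction s using Finset.strongInduction with
  | H s ih =>
  obtain rfl | ⟨a, has⟩ := s.eq_empty_or_nonempty
  · rw [card_empty, Nat.bell_zero]
    exact Fintype.card_unique (α := Finpartition (⊥ : Finset α))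
  · have ha : a ∉ s.erase a := notMem_erase a s
    have hsdiff : ∀ t ∈ (s.erase a).powerset,
        Fintype.card (Finpartition (s.erase a \ t)) = Nat.bell (#(s.erase a) - #t) := by
      intro t ht
      rw [ih _ (sdiff_subset.trans_ssubset (erase_ssubset has)),
        card_sdiff_of_subset (mem_powerset.1 ht)]
    rw [← insert_erase has, card_finpartition_insert ha, sum_congr rfl hsdiff,
      sum_powerset_apply_card (fun k ↦ Nat.bell (#(s.erase a) - k)), card_insert_of_notMem ha,
      Nat.bell_succ, ← Nat.range_succ_eq_Iic]
    simp only [smul_eq_mul]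

end CardFinpartition

section BinomialTransform

variable {R : Type*} [CommSemiring R]

def binomialTransform (a : ℕ → R) (n : ℕ) : R :=
  ∑ k ∈ range (n + 1), (n.choose k : R) * a k

lemma binomialTransform_succ (a : ℕ → R) (n : ℕ) :
    binomialTransform a (n + 1) =
      binomialTransform a n + binomialTransform (fun k ↦ a (k + 1)) n :=
  sum_choose_succ_mul (fun k _ ↦ a k) n

variable [LinearOrder R] [IsStrictOrderedRing R] [ExistsAddOfLE R]

theorem binomialTransform_succ_sq_le {a : ℕ → R} {n : ℕ} (ha : ∀ k, 0 ≤ a k)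
    (hlog : ∀ k ≤ n, a (k + 1) ^ 2 ≤ a k * a (k + 2)) :
    binomialTransform a (n + 1) ^ 2 ≤ binomialTransform a n * binomialTransform a (n + 2) := by
  set T := binomialTransform a n
  set U := binomialTransform (fun k ↦ a (k + 1)) n
  set V := binomialTransform (fun k ↦ a (k + 1 + 1)) n
  have hUTV : U ^ 2 ≤ T * V := by
    have hnonneg (i k : ℕ) : 0 ≤ (n.choose k : R) * a (k + i) :=
      mul_nonneg (Nat.cast_nonneg _) (ha _)
    refine sum_sq_le_sum_mul_sum_of_sq_le_mul _ (fun k _ ↦ hnonneg 0 k) (fun k _ ↦ hnonneg 2 k)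
      fun k hk ↦ ?_
    calc ((n.choose k : R) * a (k + 1)) ^ 2 = (n.choose k : R) ^ 2 * a (k + 1) ^ 2 := by ring
      _ ≤ (n.choose k : R) ^ 2 * (a k * a (k + 2)) :=
        mul_le_mul_of_nonneg_left (hlog k (Nat.lt_succ_iff.1 (mem_range.1 hk))) (sq_nonneg _)
      _ = (n.choose k * a k) * (n.choose k * a (k + 1 + 1)) := by ring
  have h1 : binomialTransform a (n + 1) = T + U := binomialTransform_succ a n
  have h2 : binomialTransform a (n + 2) = T + 2 * U + V := by
    rw [binomialTransform_succ, binomialTransform_succ, binomialTransform_succ]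
    ring
  calc binomialTransform a (n + 1) ^ 2 = T * (T + 2 * U) + U ^ 2 := by rw [h1]; ring
    _ ≤ T * (T + 2 * U) + T * V := by gcongr
    _ = binomialTransform a n * binomialTransform a (n + 2) := by rw [h2]; ring

end BinomialTransform

lemma Nat.bell_succ_eq_binomialTransform (n : ℕ) :
    Nat.bell (n + 1) = binomialTransform Nat.bell n := by
  rw [Nat.bell_succ, ← Nat.range_succ_eq_Iic, binomialTransform, ← sum_range_reflect]
  refine sum_congr rfl fun k hk ↦ ?_
  have hk : k ≤ n := Nat.lt_succ_iff.1 (mem_range.1 hk)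
  rw [Nat.cast_id, Nat.add_sub_cancel, Nat.choose_symm hk, Nat.sub_sub_self hk]

theorem Nat.bell_succ_sq_le (n : ℕ) : Nat.bell (n + 1) ^ 2 ≤ Nat.bell n * Nat.bell (n + 2) := by
  induction n using Nat.strong_induction_on with
  | _ n ih =>
  rcases n with _ | m
  · simp
  · rw [Nat.bell_succ_eq_binomialTransform, Nat.bell_succ_eq_binomialTransform,
      Nat.bell_succ_eq_binomialTransform]
    exact binomialTransform_succ_sq_le (fun _ ↦ Nat.zero_le _)
      fun k hk ↦ ih k (Nat.lt_succ_of_le hk)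

/-- The sequence of Bell numbers is log-convex. -/
theorem bell_logConvex : ∀ n : ℕ, bell (n + 1) ^ 2 ≤ bell n * bell (n + 2) := by
  have hbell (n : ℕ) : bell n = Nat.bell n := by
    rw [bell, card_finpartition_eq_bell, card_fin]
  intro n
  simpa only [hbell] using Nat.bell_succ_sq_le n
end
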